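/- arXiv:2301.12212 — 12 statements merged into one kernel-verified Lean document; each statement's English description precedes it below -/
import Mathlib

section
/- In every finite connected graph, there exists an ordering v_1, v_2, ..., v_k of all vertices (each vertex appearing exactly once) such that for every i, the graph distance between v_i and v_{i+1} is at most 3. -/
/-!
Induct on a vertex set `S` that is connected through `S`, producing an ordering of `S` that starts
at a root `r`, ends within distance one of `r`, and has consecutive vertices at distance at most
three. Pick a neighbour `c` of `r` in `S` and let `C` be the component of `c` in `S \ {r}`. Then
`S \ C` is connected through `r` and `C` through `c`; an ordering of `S \ C` from `r`, followed by
the reverse of an ordering of `C` from `c`, is the required ordering of `S`: at the junction the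
two vertices are within distance one of `r` and of `c` respectively, and it ends at `c`.
-/

namespace SimpleGraph

variable {V : Type*} {G : SimpleGraph V}

def ReachableIn (G : SimpleGraph V) (S : Finset V) (a b : V) : Prop :=
  ∃ p : G.Walk a b, ∀ x ∈ p.support, x ∈ S

namespace ReachableIn

variable {S : Finset V} {a b c : V}

theorem refl (ha : a ∈ S) : G.ReachableIn S a a :=
  ⟨.nil, by simpa using ha⟩

theorem symm (h : G.ReachableIn S a b) : G.ReachableIn S b a := by
  obtain ⟨p, hp⟩ := h
  exact ⟨p.reverse, by simpa using hp⟩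

theorem trans (hab : G.ReachableIn S a b) (hbc : G.ReachableIn S b c) : G.ReachableIn S a c := by
  obtain ⟨p, hp⟩ := hab
  obtain ⟨q, hq⟩ := hbc
  refine ⟨p.append q, fun x hx => ?_⟩
  rcases (Walk.mem_support_append_iff p q).mp hx with hx | hx
  exacts [hp x hx, hq x hx]

theorem of_adj (h : G.Adj a b) (ha : a ∈ S) (hb : b ∈ S) : G.ReachableIn S a b :=
  ⟨h.toWalk, by simp [ha, hb]⟩

theorem exists_adj_of_ne (h : G.ReachableIn S a b) (hab : a ≠ b) :
    ∃ c, G.Adj a c ∧ c ∈ S := by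
  obtain ⟨p, hp⟩ := h
  cases p with
  | nil => exact absurd rfl hab
  | cons hadj _ => exact ⟨_, hadj, hp _ (by simp)⟩

end ReachableIn

section Component

variable {T : Finset V} {a b c : V}

open scoped Classical in
noncomputable def componentIn (G : SimpleGraph V) (T : Finset V) (c : V) : Finset V :=
  {w ∈ T | G.ReachableIn T c w}

theorem mem_componentIn : b ∈ G.componentIn T c ↔ b ∈ T ∧ G.ReachableIn T c b := by
  classical
  exact Finset.mem_filter

theorem componentIn_subset : G.componentIn T c ⊆ T :=
  fun _ hb => (mem_componentIn.mp hb).1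

theorem mem_componentIn_self (hc : c ∈ T) : c ∈ G.componentIn T c :=
  mem_componentIn.mpr ⟨hc, .refl hc⟩

theorem mem_componentIn_of_adj (ha : a ∈ G.componentIn T c) (hab : G.Adj a b) (hb : b ∈ T) :
    b ∈ G.componentIn T c := by
  obtain ⟨haT, hca⟩ := mem_componentIn.mp ha
  exact mem_componentIn.mpr ⟨hb, hca.trans (.of_adj hab haT hb)⟩

theorem reachableIn_componentIn_of_walk (p : G.Walk a b) (hp : ∀ x ∈ p.support, x ∈ T)
    (ha : a ∈ G.componentIn T c) : G.ReachableIn (G.componentIn T c) a b := by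
  induction p with
  | nil => exact .refl ha
  | cons hadj _ ih =>
    have hv := mem_componentIn_of_adj ha hadj (hp _ (by simp))
    exact (ReachableIn.of_adj hadj ha hv).trans (ih (fun x hx => hp x (by simp [hx])) hv)

theorem reachableIn_componentIn (hw : b ∈ G.componentIn T c) :
    G.ReachableIn (G.componentIn T c) c b := by
  obtain ⟨-, p, hp⟩ := mem_componentIn.mp hw
  exact reachableIn_componentIn_of_walk p hp (mem_componentIn_self (hp c p.start_mem_support))

/-- A walk ending at `r` that starts outside the component `C` of `S \ {r}` cannot enter `C`
before reaching `r`, since `C` is closed under adjacency within `S \ {r}`. -/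
theorem reachableIn_sdiff_componentIn_of_walk [DecidableEq V] {S : Finset V} {r u : V}
    (p : G.Walk u r) (hp : ∀ x ∈ p.support, x ∈ S) (hu : u ∉ G.componentIn (S.erase r) c) :
    G.ReachableIn (S \ G.componentIn (S.erase r) c) u r := by
  induction p with
  | nil => exact .refl (Finset.mem_sdiff.mpr ⟨hp _ (by simp), hu⟩)
  | @cons u v r hadj _ ih =>
    have huS : u ∈ S := hp u (by simp)
    by_cases hur : u = r
    · subst hur
      exact .refl (Finset.mem_sdiff.mpr ⟨huS, hu⟩)
    have hv : v ∉ G.componentIn (S.erase r) c := fun hv =>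
      hu (mem_componentIn_of_adj hv hadj.symm (Finset.mem_erase.mpr ⟨hur, huS⟩))
    have hvS : v ∈ S := hp v (by simp)
    exact (ReachableIn.of_adj hadj (Finset.mem_sdiff.mpr ⟨huS, hu⟩)
      (Finset.mem_sdiff.mpr ⟨hvS, hv⟩)).trans (ih (fun x hx => hp x (by simp [hx])) hv)

theorem reachableIn_sdiff_componentIn [DecidableEq V] {S : Finset V} {r w : V}
    (hS : ∀ v ∈ S, G.ReachableIn S r v) (hw : w ∈ S \ G.componentIn (S.erase r) c) :
    G.ReachableIn (S \ G.componentIn (S.erase r) c) r w := by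
  obtain ⟨hwS, hwC⟩ := Finset.mem_sdiff.mp hw
  obtain ⟨p, hp⟩ := (hS w hwS).symm
  exact (reachableIn_sdiff_componentIn_of_walk p hp hwC).symm

end Component

/-- A Hamiltonian path of `S` in the cube of `G`, rooted at `r`. Ending next to the root is what
lets two tours be glued in `IsCubeTour.append_reverse`. -/
structure IsCubeTour (G : SimpleGraph V) (S : Finset V) (r : V) (l : List V) : Prop where
  nodup : l.Nodup
  mem_iff : ∀ x, x ∈ l ↔ x ∈ S
  head?_eq : l.head? = some r
  getLast?_near : ∀ z ∈ l.getLast?, G.edist z r ≤ 1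
  isChain : l.IsChain (fun a b => G.edist a b ≤ 3)

namespace IsCubeTour

variable {A B : Finset V} {r c : V} {l₁ l₂ : List V}

theorem singleton (r : V) : G.IsCubeTour {r} r [r] where
  nodup := List.nodup_singleton r
  mem_iff := by simp
  head?_eq := rfl
  getLast?_near := by simp
  isChain := List.isChain_singleton r

theorem ne_nil (h : G.IsCubeTour A r l₁) : l₁ ≠ [] := by
  rintro rfl
  simpa using h.head?_eq

theorem append_reverse [DecidableEq V] (h₁ : G.IsCubeTour A r l₁) (h₂ : G.IsCubeTour B c l₂)
    (hAB : Disjoint A B) (hrc : G.Adj r c) : G.IsCubeTour (A ∪ B) r (l₁ ++ l₂.reverse) where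
  nodup := h₁.nodup.append (List.nodup_reverse.mpr h₂.nodup) fun x hx₁ hx₂ =>
    Finset.disjoint_left.mp hAB ((h₁.mem_iff x).mp hx₁)
      ((h₂.mem_iff x).mp (List.mem_reverse.mp hx₂))
  mem_iff x := by simp [h₁.mem_iff, h₂.mem_iff]
  head?_eq := by rw [List.head?_append_of_ne_nil _ h₁.ne_nil, h₁.head?_eq]
  getLast?_near z hz := by
    rw [List.getLast?_append_of_ne_nil _ (by simpa using h₂.ne_nil), List.getLast?_reverse,
      h₂.head?_eq, Option.mem_some_iff] at hz
    subst hz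
    exact edist_le_one_iff_adj_or_eq.mpr (.inl hrc.symm)
  isChain := by
    refine h₁.isChain.append (List.isChain_reverse.mpr ?_) fun x hx y hy => ?_
    · exact h₂.isChain.imp fun a b h => by rwa [edist_comm]
    · rw [List.head?_reverse] at hy
      calc G.edist x y ≤ G.edist x r + G.edist r c + G.edist c y :=
            G.edist_triangle.trans (add_le_add_left G.edist_triangle _)
        _ ≤ 1 + 1 + 1 := by
            gcongr
            · exact h₁.getLast?_near x hx
            · exact edist_le_one_iff_adj_or_eq.mpr (.inl hrc)
            · rw [edist_comm]; exact h₂.getLast?_near y hy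
        _ = 3 := by norm_num

end IsCubeTour

theorem exists_isCubeTour [DecidableEq V] (S : Finset V) {r : V} (hr : r ∈ S)
    (hS : ∀ v ∈ S, G.ReachableIn S r v) : ∃ l, G.IsCubeTour S r l := by
  induction S using Finset.strongInduction generalizing r with
  | H S ih =>
  by_cases hsing : ∀ v ∈ S, v = r
  · refine ⟨[r], ?_⟩
    convert IsCubeTour.singleton (G := G) r
    exact Finset.eq_singleton_iff_unique_mem.mpr ⟨hr, hsing⟩
  push Not at hsing
  obtain ⟨v, hv, hvr⟩ := hsing
  obtain ⟨c, hrc, hcS⟩ := (hS v hv).exists_adj_of_ne hvr.symm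
  set C := G.componentIn (S.erase r) c
  have hcC : c ∈ C := mem_componentIn_self (Finset.mem_erase.mpr ⟨hrc.ne.symm, hcS⟩)
  have hCS : C ⊆ S := componentIn_subset.trans (S.erase_subset r)
  have hrC : r ∉ C := fun h => (Finset.mem_erase.mp (componentIn_subset h)).1 rfl
  obtain ⟨l₁, h₁⟩ := ih (S \ C) (Finset.sdiff_ssubset hCS ⟨c, hcC⟩)
    (Finset.mem_sdiff.mpr ⟨hr, hrC⟩) fun w hw => reachableIn_sdiff_componentIn hS hw
  obtain ⟨l₂, h₂⟩ := ih C ((Finset.ssubset_iff_of_subset hCS).mpr ⟨r, hr, hrC⟩) hcC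
    fun w hw => reachableIn_componentIn hw
  refine ⟨l₁ ++ l₂.reverse, ?_⟩
  rw [← Finset.sdiff_union_of_subset hCS]
  exact h₁.append_reverse h₂ Finset.sdiff_disjoint hrc

end SimpleGraph

/-- In every finite connected graph, there exists an ordering of all vertices
(each appearing exactly once) such that consecutive vertices have graph
distance at most 3. -/
theorem stmt0 {V : Type} [Fintype V] [DecidableEq V] (G : SimpleGraph V)
    (hconn : G.Connected) :
    ∃ l : List V, l.Nodup ∧ (∀ v : V, v ∈ l) ∧
      ∀ i, (h : i + 1 < l.length) →
        G.dist (l.get ⟨i, by omega⟩) (l.get ⟨i + 1, h⟩) ≤ 3 := by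
  obtain ⟨r⟩ := hconn.nonempty
  obtain ⟨l, hl⟩ := G.exists_isCubeTour Finset.univ (Finset.mem_univ r) fun v _ =>
    let ⟨p⟩ := hconn.preconnected r v
    ⟨p, fun x _ => Finset.mem_univ x⟩
  refine ⟨l, hl.nodup, fun v => (hl.mem_iff v).mpr (Finset.mem_univ v), fun i h => ?_⟩
  exact ENat.toNat_le_of_le_natCast (List.isChain_iff_getElem.mp hl.isChain i h)
end

section
/- There exists a finite connected graph G and no ordering of all its vertices, each appearing exactly once, in which consecutive vertices have distance at most 2: specifically, the star K_{1,5} where each of the 5 leaves is subdivided once (a spider with 5 legs of length 2) admits no such ordering. -/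
/-!
The only vertices within distance `2` of a leaf are the leaf itself, its middle vertex and the
center. A leaf that is not at an end of the ordering has two distinct neighbours in it, both within
distance `2`, so one of them is the center. Hence every leaf sits at an end of the ordering or right
next to the center: at most four positions for five leaves.
-/

/-- The spider with 5 legs of length 2: center `0`, middle vertices `1,…,5`
(adjacent to the center), and leaves `6,…,10` with leaf `i+5` adjacent to
middle vertex `i`.  This is the star `K_{1,5}` with every edge subdivided. -/
def spider5 : SimpleGraph (Fin 11) :=
  SimpleGraph.fromRel (fun a b =>
    (a = 0 ∧ 1 ≤ b.val ∧ b.val ≤ 5) ∨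
    (1 ≤ a.val ∧ a.val ≤ 5 ∧ b.val = a.val + 5))

namespace SimpleGraph

variable {V : Type*} {G : SimpleGraph V} {u v : V}

lemma Reachable.eq_or_adj_or_exists_adj_adj_of_dist_le_two (h : G.Reachable u v)
    (hd : G.dist u v ≤ 2) : u = v ∨ G.Adj u v ∨ ∃ w, G.Adj u w ∧ G.Adj w v := by
  obtain ⟨p, hp⟩ := h.exists_walk_length_eq_dist
  match p, (hp ▸ hd : p.length ≤ 2) with
  | .nil, _ => exact .inl rfl
  | .cons h .nil, _ => exact .inr (.inl h)
  | .cons h (.cons h' .nil), _ => exact .inr (.inr ⟨_, h, h'⟩)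
  | .cons _ (.cons _ (.cons _ _)), hl => simp at hl

end SimpleGraph

namespace List

variable {α : Type*} {R : α → α → Prop} {l : List α}

lemma Nodup.getElem_pred_eq_or_getElem_succ_eq (hl : l.Nodup)
    (hR : l.IsChain R) {i : ℕ} (hi : 0 < i)
    (hi' : i + 1 < l.length) {a b : α}
    (hab : ∀ y, y ≠ l[i] → R y l[i] ∨ R l[i] y → y = a ∨ y = b) :
    l[i - 1] = a ∨ l[i + 1] = a := by
  rw [isChain_iff_getElem] at hR
  have hpred : l[i - 1] = a ∨ l[i - 1] = b := by
    refine hab _ (fun h => by have := (hl.getElem_inj_iff).1 h; omega) (.inl ?_)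
    simpa [Nat.sub_add_cancel hi] using hR (i - 1) (by omega)
  have hsucc : l[i + 1] = a ∨ l[i + 1] = b :=
    hab _ (fun h => by have := (hl.getElem_inj_iff).1 h; omega) (.inr (hR i hi'))
  have hne : l[i - 1] ≠ l[i + 1] := fun h => by have := (hl.getElem_inj_iff).1 h; omega
  rcases hpred with h | h
  · exact .inl h
  · exact .inr (hsucc.resolve_right fun h' => hne (h.trans h'.symm))

end List

open SimpleGraph

instance : DecidableRel spider5.Adj := fun a b =>
  decidable_of_iff _ (fromRel_adj _ a b).symm

theorem spider5_connected : spider5.Connected := by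
  have hzero : ∀ v : Fin 11, spider5.Reachable 0 v := by
    have legs : ∀ v : Fin 11,
        v = 0 ∨ spider5.Adj 0 v ∨ spider5.Adj 0 (v - 5) ∧ spider5.Adj (v - 5) v := by decide
    intro v
    rcases legs v with rfl | h | ⟨h, h'⟩
    · rfl
    · exact h.reachable
    · exact h.reachable.trans h'.reachable
  exact (connected_iff _).2 ⟨fun u v => (hzero u).symm.trans (hzero v), ⟨0⟩⟩

lemma spider5_eq_or_eq_zero_or_eq_sub_five_of_dist_le_two {v w : Fin 11} (hv : 6 ≤ v.val)
    (hd : spider5.dist v w ≤ 2) : w = v ∨ w = 0 ∨ w = v - 5 := by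
  have key : ∀ v w : Fin 11, 6 ≤ v.val →
      (v = w ∨ spider5.Adj v w ∨ ∃ u, spider5.Adj v u ∧ spider5.Adj u w) →
      w = v ∨ w = 0 ∨ w = v - 5 := by decide
  exact key v w hv ((spider5_connected v w).eq_or_adj_or_exists_adj_adj_of_dist_le_two hd)

lemma spider5_idxOf_leaf_mem {l : List (Fin 11)} (hl : l.Nodup)
    (hchain : l.IsChain (fun a b => spider5.dist a b ≤ 2))
    {v : Fin 11} (hv : 6 ≤ v.val) (hvl : v ∈ l) :
    l.idxOf v ∈ ({0, l.length - 1, l.idxOf 0 - 1, l.idxOf 0 + 1} : Finset ℕ) := by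
  set k := l.idxOf v
  have hk : k < l.length := List.idxOf_lt_length_iff.2 hvl
  have hlk : l[k] = v := List.getElem_idxOf hk
  simp only [Finset.mem_insert, Finset.mem_singleton]
  by_cases hk0 : k = 0
  · exact .inl hk0
  by_cases hkl : k + 1 = l.length
  · exact .inr (.inl (by omega))
  have hnbr : ∀ y, y ≠ l[k] → spider5.dist y l[k] ≤ 2 ∨ spider5.dist l[k] y ≤ 2 →
      y = 0 ∨ y = v - 5 := by
    intro y hy hd
    rw [hlk] at hy hd
    rw [SimpleGraph.dist_comm, or_self] at hd
    exact (spider5_eq_or_eq_zero_or_eq_sub_five_of_dist_le_two hv hd).resolve_left hy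
  rcases hl.getElem_pred_eq_or_getElem_succ_eq hchain (i := k) (by omega) (by omega) hnbr
    with h | h
  · have := hl.idxOf_getElem (k - 1) (by omega)
    rw [h] at this
    omega
  · have := hl.idxOf_getElem (k + 1) (by omega)
    rw [h] at this
    omega

/-- There is a finite connected graph — namely the spider with 5 legs of
length 2 — admitting no ordering of all its vertices (each appearing exactly
once) in which consecutive vertices have graph distance at most 2. -/
theorem stmt2 :
    spider5.Connected ∧
    ¬ ∃ l : List (Fin 11), l.Nodup ∧ (∀ v : Fin 11, v ∈ l) ∧
        ∀ i, (h : i + 1 < l.length) →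
          spider5.dist (l.get ⟨i, by omega⟩) (l.get ⟨i + 1, h⟩) ≤ 2 := by
  refine ⟨spider5_connected, ?_⟩
  rintro ⟨l, hl, hall, hchain⟩
  replace hchain : l.IsChain (fun a b => spider5.dist a b ≤ 2) :=
    List.isChain_iff_getElem.2 hchain
  let leaves : Finset (Fin 11) := {v | 6 ≤ v.val}
  have hmaps : Set.MapsTo l.idxOf leaves
      (({0, l.length - 1, l.idxOf 0 - 1, l.idxOf 0 + 1} : Finset ℕ) : Set ℕ) :=
    fun v hv => spider5_idxOf_leaf_mem hl hchain (by simpa [leaves] using hv) (hall v)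
  have hinj : Set.InjOn l.idxOf leaves := fun v _ _ _ h => (List.idxOf_inj (hall v)).1 h
  have hcard := (Finset.card_le_card_of_injOn _ hmaps hinj).trans Finset.card_le_four
  exact absurd hcard (by decide)
end

section
/- Let D be an acyclic orientation without v-structures (AMO) of a chordal graph G, and let x, y be two vertices connected by a path p in G. If x precedes y in every topological ordering of D restricted along p, then every edge of a shortest path between x and y in G is oriented from the x-side toward the y-side in D; in particular, if x and y are connected in G, then no AMO of G simultaneously orients a shortest x–y path toward y and toward x. -/
section Helpers
variable {V : Type} [Fintype V]


lemma myLength_drop {V} {G : SimpleGraph V} {u v : V} (p : G.Walk u v) (n : ℕ) :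
    (p.drop n).length = p.length - n := by
  induction p generalizing n with
  | nil => simp [SimpleGraph.Walk.drop]
  | cons h q ih =>
    cases n with
    | zero => simp [SimpleGraph.Walk.drop]
    | succ m => simp [SimpleGraph.Walk.drop, ih m]

lemma myGetVert_injOn {V} {G : SimpleGraph V} {u v : V} (p : G.Walk u v) (hp : p.IsPath) :
    ∀ i j, i ≤ p.length → j ≤ p.length → p.getVert i = p.getVert j → i = j := by
  induction p with
  | nil => intro i j hi hj _; simp at hi hj; omega
  | cons h q ih =>
    intro i j hi hj hij
    rw [SimpleGraph.Walk.cons_isPath_iff] at hp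
    match i, j with
    | 0, 0 => rfl
    | 0, m + 1 =>
      exfalso; apply hp.2
      rw [SimpleGraph.Walk.mem_support_iff_exists_getVert]
      refine ⟨m, ?_, by simpa using hj⟩
      simpa [SimpleGraph.Walk.getVert_cons_succ] using hij.symm
    | m + 1, 0 =>
      exfalso; apply hp.2
      rw [SimpleGraph.Walk.mem_support_iff_exists_getVert]
      refine ⟨m, ?_, by simpa using hi⟩
      simpa [SimpleGraph.Walk.getVert_cons_succ] using hij
    | m + 1, l + 1 =>
      have := ih hp.1 m l (by simpa using hi) (by simpa using hj)
        (by simpa [SimpleGraph.Walk.getVert_cons_succ] using hij)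
      omega

lemma myMem_darts {V} {G : SimpleGraph V} {u v : V} (p : G.Walk u v) (d : G.Dart) :
    d ∈ p.darts ↔ ∃ i, i < p.length ∧ d.fst = p.getVert i ∧ d.snd = p.getVert (i+1) := by
  induction p with
  | nil => simp
  | cons h q ih =>
    simp only [SimpleGraph.Walk.darts_cons, List.mem_cons, ih, SimpleGraph.Walk.length_cons]
    constructor
    · rintro (rfl | ⟨i, hi, h1, h2⟩)
      · refine ⟨0, by omega, (SimpleGraph.Walk.getVert_zero _).symm, ?_⟩
        rw [SimpleGraph.Walk.getVert_cons_succ, SimpleGraph.Walk.getVert_zero]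
      · exact ⟨i + 1, by omega, h1, h2⟩
    · rintro ⟨i, hi, h1, h2⟩
      match i with
      | 0 =>
        left
        ext
        · simpa using h1
        · simpa [SimpleGraph.Walk.getVert_cons_succ, SimpleGraph.Walk.getVert_zero] using h2
      | m + 1 =>
        right
        exact ⟨m, by omega, by simpa [SimpleGraph.Walk.getVert_cons_succ] using h1,
          by simpa [SimpleGraph.Walk.getVert_cons_succ] using h2⟩

lemma myForward (G : SimpleGraph V)
    (D : V → V → Prop)
    (hor1 : ∀ u v, D u v → G.Adj u v) (hor2 : ∀ u v, G.Adj u v → (D u v ↔ ¬ D v u))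
    (hnovs : ¬ ∃ a b c : V, a ≠ b ∧ ¬ G.Adj a b ∧ D a c ∧ D b c)
    (x y : V) (hxy : x ≠ y)
    (p : G.Walk x y) (hp : p.IsPath) (hshort : p.length = G.dist x y)
    (hLd : ∀ {a b : V} (q : G.Walk a b) (m : ℕ), (q.drop m).length = q.length - m)
    (hinj : ∀ i j, i ≤ p.length → j ≤ p.length → p.getVert i = p.getVert j → i = j)
    (htopo : ∀ σ : V → ℕ, Set.InjOn σ {v | v ∈ p.support} →
      (∀ u v : V, u ∈ p.support → v ∈ p.support → D u v → σ u < σ v) →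
      σ x < σ y) :
    ∀ i, i < p.length → D (p.getVert i) (p.getVert (i+1)) := by
  classical
  set n := p.length with hn
  -- n ≥ 1
  have hn1 : 1 ≤ n := by
    rcases Nat.eq_zero_or_pos n with h0 | h1
    · exact absurd (SimpleGraph.Walk.eq_of_length_eq_zero h0) hxy
    · exact h1
  have hadj : ∀ i, i < n → G.Adj (p.getVert i) (p.getVert (i+1)) :=
    fun i hi => p.adj_getVert_succ hi
  -- shortest paths are induced
  have hind : ∀ i j, i + 1 < j → j ≤ n → ¬ G.Adj (p.getVert i) (p.getVert j) := by
    intro i j hij hj hA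
    have hi : i ≤ n := by omega
    have hrev : p.reverse.getVert (n - i) = p.getVert i := by
      rw [SimpleGraph.Walk.getVert_reverse]
      congr 1
      simp only [← hn]
      omega
    have hq1 : ((p.reverse.drop (n - i)).copy hrev rfl).reverse.length = i := by
      rw [SimpleGraph.Walk.length_reverse, SimpleGraph.Walk.length_copy, hLd,
        SimpleGraph.Walk.length_reverse]
      simp only [← hn]
      omega
    have hw : ((((p.reverse.drop (n - i)).copy hrev rfl).reverse).append
        (SimpleGraph.Walk.cons hA (p.drop j))).length = i + (1 + (n - j)) := by
      rw [SimpleGraph.Walk.length_append, SimpleGraph.Walk.length_cons, hq1, hLd]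
      omega
    have := SimpleGraph.dist_le ((((p.reverse.drop (n - i)).copy hrev rfl).reverse).append
        (SimpleGraph.Walk.cons hA (p.drop j)))
    omega
  -- no backward-then-forward... propagation of forward
  have hbk : ∀ i, i < n → ¬ D (p.getVert i) (p.getVert (i+1)) →
      D (p.getVert (i+1)) (p.getVert i) := by
    intro i hi hnd
    exact (hor2 _ _ (hadj i hi).symm).mpr hnd
  have hprop : ∀ i, i + 1 < n → D (p.getVert i) (p.getVert (i+1)) →
      D (p.getVert (i+1)) (p.getVert (i+2)) := by
    intro i hi hf
    by_contra hnf
    refine hnovs ⟨p.getVert i, p.getVert (i+2), p.getVert (i+1), ?_, ?_, hf,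
      hbk (i+1) (by omega) hnf⟩
    · intro he
      have := hinj i (i+2) (by omega) (by omega) he
      omega
    · exact hind i (i+2) (by omega) (by omega)
  -- main argument
  by_contra hnot
  push_neg at hnot
  obtain ⟨i0, hi0, hb0⟩ := hnot
  set k : ℕ := if h : ∃ i, i < n ∧ D (p.getVert i) (p.getVert (i+1)) then Nat.find h else n
    with hkdef
  have hkn : k ≤ n := by
    rw [hkdef]; split
    · rename_i h
      exact le_of_lt (Nat.find_spec h).1
    · exact le_rfl
  have hkbk : ∀ i, i < k → ¬ D (p.getVert i) (p.getVert (i+1)) := by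
    intro i hik hd
    rw [hkdef] at hik
    split at hik
    · rename_i h
      have hlt := (Nat.find_spec h).1
      exact (Nat.find_min h hik) ⟨by omega, hd⟩
    · rename_i h
      exact h ⟨i, by omega, hd⟩
  have hkspec : k < n → D (p.getVert k) (p.getVert (k+1)) := by
    rw [hkdef]
    split
    · rename_i h
      exact fun _ => (Nat.find_spec h).2
    · omega
  have hkfw : ∀ i, k ≤ i → i < n → D (p.getVert i) (p.getVert (i+1)) := by
    intro i hki hin
    induction i, hki using Nat.le_induction with
    | base => exact hkspec hin
    | succ m hm ih =>
      exact hprop m hin (ih (by omega))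
  have hk1 : 1 ≤ k := by
    rcases Nat.eq_zero_or_pos k with h0 | h1
    · exact absurd (hkfw i0 (by omega) hi0) hb0
    · exact h1
  -- the ordering
  set f : ℕ → ℕ := fun i => if k ≤ i then i - k else n - i with hf
  have hfinj : ∀ i j, i ≤ n → j ≤ n → f i = f j → i = j := by
    intro i j hi hj hfij
    rw [hf] at hfij
    simp only at hfij
    split at hfij <;> split at hfij <;> omega
  set σ : V → ℕ := fun u =>
    if h : ∃ i, i ≤ n ∧ p.getVert i = u then f (Nat.find h) else 0 with hσ
  have hσv : ∀ i, i ≤ n → σ (p.getVert i) = f i := by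
    intro i hi
    have h : ∃ j, j ≤ n ∧ p.getVert j = p.getVert i := ⟨i, hi, rfl⟩
    rw [hσ]
    simp only [dif_pos h]
    exact congrArg f (hinj _ _ (Nat.find_spec h).1 hi (Nat.find_spec h).2)
  have hmem : ∀ u, u ∈ p.support → ∃ i, i ≤ n ∧ p.getVert i = u := by
    intro u hu
    rw [SimpleGraph.Walk.mem_support_iff_exists_getVert] at hu
    obtain ⟨i, h1, h2⟩ := hu
    exact ⟨i, h2, h1⟩
  have hinjσ : Set.InjOn σ {v | v ∈ p.support} := by
    intro u hu w hw huw
    obtain ⟨i, hi, rfl⟩ := hmem u hu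
    obtain ⟨j, hj, rfl⟩ := hmem w hw
    rw [hσv i hi, hσv j hj] at huw
    rw [hfinj i j hi hj huw]
  have hmono : ∀ u v : V, u ∈ p.support → v ∈ p.support → D u v → σ u < σ v := by
    intro u w hu hw hD'
    obtain ⟨i, hi, rfl⟩ := hmem u hu
    obtain ⟨j, hj, rfl⟩ := hmem w hw
    rw [hσv i hi, hσv j hj]
    have hA : G.Adj (p.getVert i) (p.getVert j) := hor1 _ _ hD'
    have hij : j = i + 1 ∨ i = j + 1 := by
      by_contra hc
      push_neg at hc
      rcases Nat.lt_trichotomy i j with h | h | h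
      · rcases Nat.lt_or_ge (i+1) j with h' | h'
        · exact hind i j h' hj hA
        · omega
      · exact G.irrefl (h ▸ hA)
      · rcases Nat.lt_or_ge (j+1) i with h' | h'
        · exact hind j i h' hi hA.symm
        · omega
    rcases hij with rfl | rfl
    · -- forward edge i → i+1, so k ≤ i
      have hki : k ≤ i := by
        by_contra hc
        exact hkbk i (by omega) hD'
      rw [hf]
      simp only
      rw [if_pos hki, if_pos (by omega : k ≤ i + 1)]
      omega
    · -- backward edge j+1 → j, so j < k
      have hjk : j < k := by
        by_contra hc
        push_neg at hc
        exact (hor2 _ _ hA.symm).mp (hkfw j hc (by omega)) hD'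
      rw [hf]
      simp only
      rcases Nat.lt_or_ge (j+1) k with h' | h'
      · rw [if_neg (by omega), if_neg (by omega)]
        omega
      · rw [if_pos (by omega), if_neg (by omega)]
        omega
  have := htopo σ hinjσ hmono
  have hx0 : σ x = f 0 := by
    have := hσv 0 (by omega)
    rwa [SimpleGraph.Walk.getVert_zero] at this
  have hyn : σ y = f n := by
    have := hσv n le_rfl
    rwa [SimpleGraph.Walk.getVert_length] at this
  rw [hx0, hyn, hf] at this
  simp only at this
  rw [if_neg (by omega), if_pos hkn] at this
  omega

end Helpers



/-- A graph is chordal if every cycle of length at least 4 has a chord. -/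
def IsChordal {V : Type} (G : SimpleGraph V) : Prop :=
  ∀ ⦃v : V⦄ (c : G.Walk v v), c.IsCycle → 4 ≤ c.length →
    ∃ u w : V, u ∈ c.support ∧ w ∈ c.support ∧ G.Adj u w ∧ s(u, w) ∉ c.edges

/-- `D` is an orientation of `G`: it directs exactly the edges of `G`, each in
exactly one direction. -/
def IsOrientation {V : Type} (G : SimpleGraph V) (D : V → V → Prop) : Prop :=
  (∀ u v, D u v → G.Adj u v) ∧ (∀ u v, G.Adj u v → (D u v ↔ ¬ D v u))

/-- An AMO of `G`: an orientation of all edges that is acyclic and contains no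
v-structure `a → c ← b` with `a, b` nonadjacent. -/
def IsAMO {V : Type} (G : SimpleGraph V) (D : V → V → Prop) : Prop :=
  IsOrientation G D ∧ (∀ v, ¬ Relation.TransGen D v v) ∧
  ¬ ∃ a b c : V, a ≠ b ∧ ¬ G.Adj a b ∧ D a c ∧ D b c

/-- Let `D` be an AMO of a chordal graph `G` and `p` a shortest path between
`x` and `y`.  If `x` precedes `y` in every topological ordering of `D`
restricted to the vertices of `p`, then every edge of `p` is oriented from the
`x`-side toward the `y`-side in `D`; in particular, `D` does not simultaneously
orient `p` toward `y` and toward `x`. -/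
theorem stmt5 {V : Type} [Fintype V] (G : SimpleGraph V) (hchordal : IsChordal G)
    (D : V → V → Prop) (hD : IsAMO G D) (x y : V) (hxy : x ≠ y)
    (p : G.Walk x y) (hp : p.IsPath) (hshort : p.length = G.dist x y)
    (htopo : ∀ σ : V → ℕ, Set.InjOn σ {v | v ∈ p.support} →
      (∀ u v : V, u ∈ p.support → v ∈ p.support → D u v → σ u < σ v) →
      σ x < σ y) :
    (∀ d ∈ p.darts, D d.fst d.snd) ∧ ¬ (∀ d ∈ p.darts, D d.snd d.fst) := by
  obtain ⟨⟨hor1, hor2⟩, hacy, hnovs⟩ := hD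
  have hfwd := myForward G D hor1 hor2 hnovs x y hxy p hp hshort
    (fun q m => myLength_drop q m) (myGetVert_injOn p hp) htopo
  constructor
  · intro d hd
    rw [myMem_darts] at hd
    obtain ⟨i, hi, h1, h2⟩ := hd
    rw [h1, h2]
    exact hfwd i hi
  · intro hall
    have hn1 : 0 < p.length :=
      Nat.pos_of_ne_zero (fun h0 => hxy (SimpleGraph.Walk.eq_of_length_eq_zero h0))
    have hne : p.darts ≠ [] := by
      intro h
      have hl := p.length_darts
      rw [h] at hl
      simp at hl
      omega
    obtain ⟨d, hd⟩ := List.exists_mem_of_ne_nil _ hne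
    obtain ⟨i, hi, h1, h2⟩ := (myMem_darts p d).mp hd
    have hfw := hfwd i hi
    have hbw := hall d hd
    rw [h1, h2] at hbw
    exact (hor2 _ _ (hor1 _ _ hfw)).mp hfw hbw
end

section
/- Let G be a chordal graph, let τ be a prefix of an MCS ordering, and let S be the set of unvisited vertices having the maximum number of visited neighbors. If x, y ∈ S are connected in the induced subgraph G[V \ τ], then the set of AMOs of G extendable from the MCS prefix τ followed by x is disjoint from the set of AMOs extendable from τ followed by y. -/
/-- Number of neighbors of `v` among the visited vertices `pre`. -/
def mcsLabel {V : Type} [DecidableEq V] (G : SimpleGraph V) [DecidableRel G.Adj]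
    (pre : List V) (v : V) : ℕ :=
  pre.countP (fun u => decide (G.Adj u v))

/-- `τ` is (a prefix of) a Maximum Cardinality Search ordering. -/
def IsMCSPrefix {V : Type} [DecidableEq V] (G : SimpleGraph V) [DecidableRel G.Adj]
    (τ : List V) : Prop :=
  τ.Nodup ∧ ∀ i, (h : i < τ.length) → ∀ w : V, w ∉ τ.take i →
    mcsLabel G (τ.take i) w ≤ mcsLabel G (τ.take i) (τ.get ⟨i, h⟩)

/-- A complete MCS ordering of `G`. -/
def IsMCSOrder {V : Type} [DecidableEq V] (G : SimpleGraph V) [DecidableRel G.Adj]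
    (τ : List V) : Prop :=
  IsMCSPrefix G τ ∧ ∀ v : V, v ∈ τ

/-- The AMO `D` is extendable from the prefix `pre`: some complete MCS ordering
with prefix `pre` induces `D` by orienting each edge from the earlier to the
later vertex. -/
def ExtendableFrom {V : Type} [DecidableEq V] (G : SimpleGraph V) [DecidableRel G.Adj]
    (pre : List V) (D : V → V → Prop) : Prop :=
  ∃ σ : List V, IsMCSOrder G σ ∧ pre <+: σ ∧
    ∀ u v : V, D u v ↔ G.Adj u v ∧ σ.idxOf u < σ.idxOf v

/-!
Take an induced path `x = p₀, …, p_k = y` in `G[V \ τ]` (a shortest path). In an MCS order `σ`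
of a chordal graph the earlier neighbours of every vertex form a clique (Tarjan–Yannakakis), so an
induced path has no `σ`-peak: once it goes up, it keeps going up. If `σ` extends `τ ++ [x]`, then
`x` comes first among the unvisited vertices, so the path increases along `σ` and its last edge is
oriented `p_{k-1} → y`; if `σ'` extends `τ ++ [y]`, that edge is oriented `y → p_{k-1}`.

The clique property is proved by a minimal counterexample: nonadjacent earlier neighbours `a`, `b`
of `c`, with `c` and then `a` as early as possible. The MCS exchange property (if `u < v < w`,
`u ~ w` and `u ≁ v`, some `z < v` is adjacent to `v` but not to `w`) lets one replace the later end
of the chordless path `b – c – a` by an earlier vertex, and chordality (a vertex adjacent to both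
ends of a chordless path is adjacent to all of it) keeps the path chordless. The positions of the
two ends decrease, so this cannot go on forever.
-/

open SimpleGraph

theorem Nat.exists_lt_and_not_succ {p : ℕ → Prop} (h0 : p 0) :
    ∀ {m : ℕ}, ¬ p m → ∃ k < m, p k ∧ ¬ p (k + 1)
  | 0, hm => absurd h0 hm
  | m + 1, hm => by
    by_cases hpm : p m
    · exact ⟨m, m.lt_succ_self, hpm, hm⟩
    · obtain ⟨k, hk, hpk⟩ := Nat.exists_lt_and_not_succ h0 hpm
      exact ⟨k, by omega, hpk⟩

theorem List.countP_lt_countP_of_imp {α : Type*} {l : List α} {p q : α → Bool}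
    (hpq : ∀ a ∈ l, p a → q a) {u : α} (hu : u ∈ l) (hqu : q u) (hpu : ¬ p u) :
    l.countP p < l.countP q := by
  classical
  have hperm := List.perm_cons_erase hu
  rw [hperm.countP_eq p, hperm.countP_eq q, List.countP_cons, List.countP_cons]
  have : (l.erase u).countP p ≤ (l.erase u).countP q :=
    List.countP_mono_left fun a ha => hpq a (List.mem_of_mem_erase ha)
  simp only [hqu, hpu, Bool.false_eq_true, if_true, if_false]
  omega

theorem List.isChain_take_append_drop {α : Type*} {R : α → α → Prop} {l : List α}
    (hl : l.IsChain R) {i j : ℕ} (hj : j < l.length) (hij : i < j) (hR : R l[i] l[j]) :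
    (l.take (i + 1) ++ l.drop j).IsChain R := by
  refine List.isChain_append.2 ⟨hl.take _, hl.drop _, fun a ha b hb => ?_⟩
  simp only [List.getLast?_take, List.head?_drop, List.getElem?_eq_getElem hj,
    Nat.add_sub_cancel, List.getElem?_eq_getElem (hij.trans hj), Option.some_or,
    Option.mem_def, Option.some.injEq, Nat.add_one_ne_zero, if_false] at ha hb
  exact ha ▸ hb ▸ hR

theorem List.IsPrefix.idxOf_lt_idxOf_of_concat {α : Type*} [DecidableEq α]
    {τ σ : List α} {x w : α} (hpre : τ ++ [x] <+: σ) (hx : x ∉ τ) (hw : w ∉ τ)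
    (hwx : w ≠ x) : σ.idxOf x < σ.idxOf w := by
  have hxpos : σ.idxOf x = τ.length := by
    rw [← hpre.idxOf_eq_of_mem (by simp), List.idxOf_append_of_notMem hx, List.idxOf_cons_self]
    rfl
  have hwpos := (hpre.mem_iff_idxOf_lt_length w).not.1 (by simp [hw, hwx])
  simp only [List.length_append, List.length_singleton] at hwpos
  omega

section InducedPath

variable {V : Type*} {G : SimpleGraph V}

theorem SimpleGraph.Walk.mk_mem_edges_iff_getElem_support {u v u' v' : V} (p : G.Walk u v) :
    s(u', v') ∈ p.edges ↔
      ∃ i, ∃ h : i + 1 < p.support.length, s(p.support[i], p.support[i + 1]) = s(u', v') := by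
  rw [p.mk_mem_edges_iff_exists]
  constructor
  · rintro ⟨i, hi, he⟩
    refine ⟨i, by grind, ?_⟩
    rwa [← p.getVert_eq_support_getElem (by omega), ← p.getVert_eq_support_getElem (by omega)]
  · rintro ⟨i, hi, he⟩
    simp only [Walk.length_support] at hi
    refine ⟨i, by omega, ?_⟩
    rwa [p.getVert_eq_support_getElem (by omega), p.getVert_eq_support_getElem (by omega)]

theorem SimpleGraph.exists_isCycle_of_isChain {Q : List V} (hnd : Q.Nodup)
    (hc : Q.IsChain G.Adj) (hlen : 3 ≤ Q.length) (hclose : G.Adj Q[Q.length - 1] Q[0]) :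
    ∃ C : G.Walk Q[Q.length - 1] Q[Q.length - 1], C.IsCycle ∧ C.length = Q.length ∧
      C.support.tail = Q ∧ s(Q[Q.length - 1], Q[0]) ∈ C.edges ∧
      ∀ i (hi : i + 1 < Q.length), s(Q[i], Q[i + 1]) ∈ C.edges := by
  have hne : Q ≠ [] := List.ne_nil_of_length_pos (by omega)
  let q : G.Walk Q[0] Q[Q.length - 1] := (Walk.ofSupport Q hne hc).copy
    (List.head_eq_getElem hne) (List.getLast_eq_getElem hne)
  have hsupp : q.support = Q := by simp [q]
  refine ⟨Walk.cons hclose q, (Walk.cons_isCycle_iff q hclose).2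
    ⟨by rw [q.isPath_def, hsupp]; exact hnd, fun he => ?_⟩, ?_, by simp [hsupp], by simp,
    fun i hi => List.mem_cons_of_mem _ ?_⟩
  · obtain ⟨i, hi, he⟩ := q.mk_mem_edges_iff_getElem_support.1 he
    simp only [hsupp, Sym2.eq_iff, hnd.getElem_inj_iff] at hi he
    omega
  · simp only [Walk.length_cons, ← q.length_support, hsupp]
  · exact q.mk_mem_edges_iff_getElem_support.2 ⟨i, by simpa [hsupp], by simp only [hsupp]⟩

-- Chordless paths as vertex lists rather than walks (`Walk.IsChordless`): sub-paths are then
-- simply `take` and `drop`.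
def IsInducedPath (G : SimpleGraph V) (P : List V) : Prop :=
  P.Nodup ∧ ∀ i j (hi : i < P.length) (hj : j < P.length),
    G.Adj P[i] P[j] ↔ i + 1 = j ∨ j + 1 = i

namespace IsInducedPath

variable {P : List V}

theorem adj_succ (hP : IsInducedPath G P) (i : ℕ) (hi : i + 1 < P.length) :
    G.Adj P[i] P[i + 1] :=
  (hP.2 i (i + 1) _ _).2 (Or.inl rfl)

theorem isChain (hP : IsInducedPath G P) : P.IsChain G.Adj :=
  List.isChain_iff_getElem.2 hP.adj_succ

theorem reverse (hP : IsInducedPath G P) : IsInducedPath G P.reverse := by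
  refine ⟨List.nodup_reverse.2 hP.1, fun i j hi hj => ?_⟩
  simp only [List.length_reverse] at hi hj
  simp only [List.getElem_reverse, hP.2]
  omega

theorem take (hP : IsInducedPath G P) (n : ℕ) : IsInducedPath G (P.take n) := by
  refine ⟨hP.1.sublist (List.take_sublist n P), fun i j hi hj => ?_⟩
  simp only [List.length_take] at hi hj
  simp only [List.getElem_take, hP.2]

theorem drop (hP : IsInducedPath G P) (n : ℕ) : IsInducedPath G (P.drop n) := by
  refine ⟨hP.1.sublist (List.drop_sublist n P), fun i j hi hj => ?_⟩
  simp only [List.length_drop] at hi hj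
  simp only [List.getElem_drop, hP.2]
  omega

theorem of_isChain (hnd : P.Nodup) (hc : P.IsChain G.Adj)
    (hno : ∀ i j (hij : i + 1 < j) (hj : j < P.length), ¬ G.Adj P[i] P[j]) :
    IsInducedPath G P := by
  refine ⟨hnd, fun i j hi hj => ⟨fun hadj => ?_, ?_⟩⟩
  · rcases Nat.lt_trichotomy i j with hij | rfl | hij
    · exact Or.inl (by by_contra; exact hno i j (by omega) hj hadj)
    · exact absurd hadj (G.loopless.irrefl _)
    · exact Or.inr (by by_contra; exact hno j i (by omega) hi hadj.symm)
  · rintro (rfl | rfl)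
    exacts [List.isChain_iff_getElem.1 hc i hj, (List.isChain_iff_getElem.1 hc j hi).symm]

theorem concat (hP : IsInducedPath G P) {d : V} (hd : d ∉ P)
    (hadj : ∀ i (hi : i < P.length), G.Adj P[i] d ↔ i + 1 = P.length) :
    IsInducedPath G (P ++ [d]) := by
  refine ⟨by simpa using hP.1.concat hd, ?_⟩
  have key : ∀ i j (hi : i < (P ++ [d]).length) (hj : j < (P ++ [d]).length), i ≤ j →
      (G.Adj (P ++ [d])[i] (P ++ [d])[j] ↔ i + 1 = j ∨ j + 1 = i) := by
    intro i j hi hj hij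
    simp only [List.length_append, List.length_singleton] at hi hj
    rcases Nat.lt_or_ge j P.length with hj' | hj'
    · rw [List.getElem_append_left (by omega), List.getElem_append_left hj', hP.2]
    · obtain rfl : j = P.length := by omega
      rw [List.getElem_concat_length rfl]
      rcases Nat.lt_or_ge i P.length with hi' | hi'
      · rw [List.getElem_append_left hi', hadj]
        omega
      · obtain rfl : i = P.length := by omega
        simp
  intro i j hi hj
  rcases le_total i j with hij | hij
  · exact key i j hi hj hij
  · rw [G.adj_comm, key j i hj hi hij]
    omega

end IsInducedPath

theorem SimpleGraph.Reachable.exists_isInducedPath {s : Set V} {x y : s}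
    (h : (G.induce s).Reachable x y) :
    ∃ P : List V, ∃ hP : 0 < P.length,
      IsInducedPath G P ∧ P[0] = x ∧ P[P.length - 1] = y ∧ ∀ z ∈ P, z ∈ s := by
  let S : Set (List V) := {P | P.IsChain G.Adj ∧ P.Nodup ∧ P.head? = some ↑x ∧
    P.getLast? = some ↑y ∧ ∀ z ∈ P, z ∈ s}
  obtain ⟨p, hp⟩ := h.exists_isPath
  have hpS : p.support.map Subtype.val ∈ S := by
    refine ⟨(List.isChain_map _).2 (p.isChain_adj_support.imp fun a b h => h),
      hp.support_nodup.map Subtype.val_injective, ?_, ?_, ?_⟩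
    · rw [← p.cons_tail_support, List.map_cons, List.head?_cons]
    · rw [List.getLast?_map, List.getLast?_eq_some_getLast p.support_ne_nil, p.getLast_support,
        Option.map_some]
    · simp only [List.mem_map]
      rintro _ ⟨z, -, rfl⟩
      exact z.2
  obtain ⟨P, ⟨hc, hnd, hh, hl, hs⟩, hmin⟩ := (measure List.length).wf.has_min S ⟨_, hpS⟩
  have hP : IsInducedPath G P := by
    refine .of_isChain hnd hc fun i j hij hj hadj => hmin (P.take (i + 1) ++ P.drop j)
      ⟨List.isChain_take_append_drop hc hj (by omega) hadj, hnd.sublist ?_, ?_, ?_, ?_⟩ ?_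
    · have := (List.take_sublist_take_left (l := P) hij.le).append (List.Sublist.refl (P.drop j))
      rwa [List.take_append_drop] at this
    · simp [List.head?_append, List.head?_take, hh]
    · simp [List.getLast?_append, List.getLast?_drop, show ¬ P.length ≤ j by omega, hl]
    · intro z hz
      rcases List.mem_append.1 hz with hz | hz
      exacts [hs z (List.mem_of_mem_take hz), hs z (List.mem_of_mem_drop hz)]
    · show List.length _ < List.length _
      simp only [List.length_append, List.length_take, List.length_drop]
      omega
  have hP0 : 0 < P.length := List.length_pos_iff_exists_mem.2 ⟨x, List.mem_of_mem_head? hh⟩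
  rw [List.head?_eq_getElem?, List.getElem?_eq_getElem hP0, Option.some_inj] at hh
  rw [List.getLast?_eq_getElem?, List.getElem?_eq_getElem (by omega), Option.some_inj] at hl
  exact ⟨P, hP0, hP, hh, hl, hs⟩

end InducedPath

section Chordal

variable {V : Type} {G : SimpleGraph V}

theorem IsChordal.exists_chord (hG : IsChordal G) {Q : List V} (hnd : Q.Nodup)
    (hc : Q.IsChain G.Adj) (hlen : 4 ≤ Q.length) (hclose : G.Adj Q[Q.length - 1] Q[0]) :
    ∃ i j, ∃ (hij : i + 1 < j) (hj : j < Q.length), (0 < i ∨ j + 1 < Q.length) ∧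
      G.Adj Q[i] Q[j] := by
  by_contra! hno
  obtain ⟨C, hcycle, hClen, hsupp, hCclose, hCedges⟩ :=
    exists_isCycle_of_isChain hnd hc (by omega) hclose
  obtain ⟨u, w, hu, hw, huw, hchord⟩ := hG C hcycle (by omega)
  have hmem : ∀ z ∈ C.support, ∃ j, ∃ hj : j < Q.length, Q[j] = z := by
    intro z hz
    rw [← C.cons_tail_support, hsupp, List.mem_cons] at hz
    rcases hz with rfl | hz
    exacts [⟨_, _, rfl⟩, List.mem_iff_getElem.1 hz]
  have hin : ∀ i j (hij : i < j) (hj : j < Q.length), G.Adj Q[i] Q[j] →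
      s(Q[i], Q[j]) ∈ C.edges := by
    intro i j hij hj hadj
    rcases Nat.lt_or_ge (i + 1) j with hij' | hij'
    · obtain ⟨rfl, rfl⟩ : i = 0 ∧ j = Q.length - 1 := by
        by_contra h
        exact hno i j hij' hj (by omega) hadj
      exact Sym2.eq_swap ▸ hCclose
    · obtain rfl : j = i + 1 := by omega
      exact hCedges i hj
  apply hchord
  obtain ⟨i, hi, rfl⟩ := hmem u hu
  obtain ⟨j, hj, rfl⟩ := hmem w hw
  rcases Nat.lt_trichotomy i j with hij | rfl | hij
  · exact hin i j hij hj huw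
  · exact absurd huw (G.loopless.irrefl _)
  · exact Sym2.eq_swap ▸ hin j i hij hi huw.symm

theorem IsChordal.exists_adj_of_isInducedPath (hG : IsChordal G) {P : List V}
    (hP : IsInducedPath G P) {d : V} (hd : d ∉ P) (hlen : 3 ≤ P.length)
    (h0 : G.Adj d P[0]) (hl : G.Adj d P[P.length - 1]) :
    ∃ i, ∃ hi : i + 1 < P.length, 0 < i ∧ G.Adj d P[i] := by
  have hchain : (P ++ [d]).IsChain G.Adj := by
    refine List.isChain_append.2 ⟨hP.isChain, List.isChain_singleton d, ?_⟩
    intro x hx y hy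
    rw [List.getLast?_eq_getElem?, List.getElem?_eq_getElem (by omega)] at hx
    cases hx; cases hy
    exact hl.symm
  obtain ⟨i, j, hij, hj, hend, hadj⟩ := hG.exists_chord (by simpa using hP.1.concat hd) hchain
    (by simp only [List.length_append, List.length_singleton]; omega)
    (by rw [show (P ++ [d])[0] = P[0] from List.getElem_append_left _]; simpa using h0)
  simp only [List.length_append, List.length_singleton] at hj hend
  rw [List.getElem_append_left (by omega)] at hadj
  rcases Nat.lt_or_ge j P.length with hjP | hjP
  · rw [List.getElem_append_left hjP, hP.2] at hadj
    omega
  · obtain rfl : j = P.length := by omega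
    rw [List.getElem_concat_length rfl] at hadj
    exact ⟨i, by omega, by omega, hadj.symm⟩

theorem IsChordal.adj_of_isInducedPath (hG : IsChordal G) {d : V} {P : List V}
    (hP : IsInducedPath G P) (hd : d ∉ P) (hP0 : 0 < P.length)
    (h0 : G.Adj d P[0]) (hl : G.Adj d P[P.length - 1]) (i : ℕ) (hi : i < P.length) :
    G.Adj d P[i] := by
  induction hn : P.length using Nat.strong_induction_on generalizing P i with
  | _ n ih =>
  subst hn
  by_cases hlen : P.length ≤ 2
  · obtain rfl | rfl : i = 0 ∨ i = P.length - 1 := by omega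
    exacts [h0, hl]
  obtain ⟨k, hk, hk0, hdk⟩ := hG.exists_adj_of_isInducedPath hP hd (by omega) h0 hl
  rcases Nat.lt_or_ge k i with hki | hik
  · have := ih (P.drop k).length (by grind) (hP.drop k)
      (fun h => hd (List.mem_of_mem_drop h)) (by grind) (by simpa using hdk)
      (by simpa [show k + (P.length - k - 1) = P.length - 1 by omega] using hl)
      (i - k) (by grind) rfl
    simpa [show k + (i - k) = i by omega] using this
  · have := ih (P.take (k + 1)).length (by grind) (hP.take (k + 1))
      (fun h => hd (List.mem_of_mem_take h)) (by grind) (by simpa using h0)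
      (by simpa [show min (k + 1) P.length - 1 = k by omega] using hdk) i (by grind) rfl
    simpa using this

variable [DecidableEq V] {σ : List V}

theorem IsMCSOrder.exists_adj_not_adj [DecidableRel G.Adj] (hσ : IsMCSOrder G σ) {u v w : V}
    (huv : σ.idxOf u < σ.idxOf v) (hvw : σ.idxOf v < σ.idxOf w)
    (huw : G.Adj u w) (hnuv : ¬ G.Adj u v) :
    ∃ z, σ.idxOf z < σ.idxOf v ∧ G.Adj z v ∧ ¬ G.Adj z w := by
  by_contra! h
  have hv : σ.idxOf v < σ.length := List.idxOf_lt_length_iff.2 (hσ.2 v)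
  have hw : w ∉ σ.take (σ.idxOf v) := by
    rw [List.mem_take_iff_idxOf_lt (hσ.2 w)]
    omega
  have hlabel := hσ.1.2 _ hv w hw
  rw [List.get_eq_getElem, List.getElem_idxOf hv] at hlabel
  refine absurd hlabel (Nat.not_le.2 (List.countP_lt_countP_of_imp ?_
    ((List.mem_take_iff_idxOf_lt (hσ.2 u)).2 huv) (by simpa using huw) (by simpa using hnuv)))
  intro z hz hzv
  simp only [decide_eq_true_eq] at hzv ⊢
  exact h z ((List.mem_take_iff_idxOf_lt (hσ.2 z)).1 hz) hzv

def earlierNeighbors (G : SimpleGraph V) (σ : List V) (c : V) : Set V :=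
  {u | σ.idxOf u < σ.idxOf c ∧ G.Adj u c}

-- The states of the descent proving `IsMCSOrder.isClique_earlierNeighbors`.
structure IsPeakPath (G : SimpleGraph V) (σ : List V) (c a u v : V) (P : List V) (m : ℕ) :
    Prop where
  induced : IsInducedPath G P
  zero_lt_peak : 0 < m
  lt_length : m + 1 < P.length
  getElem_peak : P[m] = c
  getElem_zero : P[0] = u
  getElem_last : P[P.length - 1] = v
  asc : ∀ i j (hij : i < j) (hj : j ≤ m), σ.idxOf P[i] < σ.idxOf P[j]
  desc : ∀ i j (hij : i < j) (hj : j < P.length), m ≤ i → σ.idxOf P[j] < σ.idxOf P[i]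
  nbr : P[m - 1] = a ∨ P[m + 1] = a

namespace IsPeakPath

variable {c a u v : V} {P : List V} {m : ℕ}

theorem reverse (h : IsPeakPath G σ c a u v P m) :
    IsPeakPath G σ c a v u P.reverse (P.length - 1 - m) where
  induced := h.induced.reverse
  zero_lt_peak := by have := h.lt_length; omega
  lt_length := by have := h.lt_length; have := h.zero_lt_peak; grind
  getElem_peak := by
    have := h.lt_length
    simp only [List.getElem_reverse]
    convert h.getElem_peak using 2
    omega
  getElem_zero := by simpa using h.getElem_last
  getElem_last := by
    simp only [List.getElem_reverse, List.length_reverse]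
    convert h.getElem_zero using 2
    have := h.lt_length
    omega
  asc i j hij hj := by
    have := h.lt_length
    simp only [List.getElem_reverse] at hj ⊢
    exact h.desc _ _ (by omega) (by omega) (by omega)
  desc i j hij hj hi := by
    simp only [List.getElem_reverse, List.length_reverse] at hi hj ⊢
    exact h.asc _ _ (by omega) (by omega)
  nbr := by
    have := h.lt_length
    simp only [List.getElem_reverse]
    rcases h.nbr with h' | h'
    · right; convert h' using 2; omega
    · left; convert h' using 2; omega

theorem asc_le (h : IsPeakPath G σ c a u v P m) {i j : ℕ} (hij : i ≤ j) (hj : j < P.length)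
    (hjm : j ≤ m) : σ.idxOf P[i] ≤ σ.idxOf P[j] := by
  rcases hij.lt_or_eq with hij | rfl
  exacts [(h.asc i j hij hjm).le, le_rfl]

theorem desc_le (h : IsPeakPath G σ c a u v P m) {i j : ℕ} (hij : i ≤ j) (hj : j < P.length)
    (hi : m ≤ i) : σ.idxOf P[j] ≤ σ.idxOf P[i] := by
  rcases hij.lt_or_eq with hij | rfl
  exacts [(h.desc i j hij hj hi).le, le_rfl]

theorem idxOf_lt_peak (h : IsPeakPath G σ c a u v P m) {i : ℕ} (hi : i < P.length)
    (him : i ≠ m) : σ.idxOf P[i] < σ.idxOf c := by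
  have hm := h.lt_length
  rcases Nat.lt_or_gt_of_ne him with him | him
  · have := h.asc i m him le_rfl
    rwa [h.getElem_peak] at this
  · have := h.desc m i him hi le_rfl
    rwa [h.getElem_peak] at this

theorem take_append (h : IsPeakPath G σ c a u v P m) {d : V} {k : ℕ} (hmk : m < k)
    (hk : k < P.length) (hd : d ∉ P) (hadj : ∀ i (hi : i ≤ k), G.Adj P[i] d ↔ i = k)
    (hdv : σ.idxOf d < σ.idxOf v) :
    IsPeakPath G σ c a u d (P.take (k + 1) ++ [d]) m := by
  have hget : ∀ i (hi : i ≤ k), (P.take (k + 1) ++ [d])[i]'(by grind) = P[i] :=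
    fun i hi => by rw [List.getElem_append_left (by grind), List.getElem_take]
  have hlen : (P.take (k + 1) ++ [d]).length = k + 2 := by grind
  have hm := h.lt_length
  refine ⟨(h.induced.take (k + 1)).concat (fun hm => hd (List.mem_of_mem_take hm)) ?_,
    h.zero_lt_peak, by omega, ?_, ?_, ?_, ?_, ?_, ?_⟩
  · intro i hi
    simp only [List.length_take] at hi
    rw [List.getElem_take, hadj i (by omega), List.length_take]
    omega
  · rw [hget m (by omega)]; exact h.getElem_peak
  · rw [hget 0 (by omega)]; exact h.getElem_zero
  · simp
  · intro i j hij hj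
    rw [hget i (by omega), hget j (by omega)]
    exact h.asc i j hij hj
  · intro i j hij hj hi
    rw [hget i (by omega)]
    rcases Nat.lt_or_ge j (k + 1) with hjk | hjk
    · rw [hget j (by omega)]
      exact h.desc i j hij (by omega) hi
    · rw [List.getElem_append_right (by grind)]
      simp only [List.getElem_singleton]
      refine lt_of_lt_of_le hdv ?_
      rw [← h.getElem_last]
      exact h.desc_le (by omega) (by omega) hi
  · rw [hget (m - 1) (by omega), hget (m + 1) (by omega)]
    exact h.nbr

theorem adj_of_adj_of_le (h : IsPeakPath G σ c a u v P m)
    (hclq : ∀ c', σ.idxOf c' < σ.idxOf c → G.IsClique (earlierNeighbors G σ c'))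
    {d : V} {i j : ℕ} (hij : i ≤ j) (hj : j < P.length) (hjm : j < m)
    (hdi : σ.idxOf d < σ.idxOf P[i]) (hdj : G.Adj d P[j]) : G.Adj d P[i] := by
  induction j, hij using Nat.le_induction with
  | base => exact hdj
  | succ j hij ih =>
    have hj1c := h.idxOf_lt_peak (i := j + 1) (by omega) (by omega)
    have hjj1 := h.asc j (j + 1) (by omega) (by omega)
    have hdj' := hdi.trans_le (h.asc_le hij (by omega) (by omega))
    refine ih (by omega) (by omega) hdi (hclq _ hj1c ⟨hdj'.trans hjj1, hdj⟩
      ⟨hjj1, h.induced.adj_succ j (by omega)⟩ fun he => ?_)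
    rw [he] at hdj'
    exact lt_irrefl _ hdj'

theorem exists_adj_not_adj [DecidableRel G.Adj] (h : IsPeakPath G σ c a u v P m)
    (hσ : IsMCSOrder G σ)
    (hclq : ∀ c', σ.idxOf c' < σ.idxOf c → G.IsClique (earlierNeighbors G σ c'))
    (hlow : ∀ z ∈ earlierNeighbors G σ c, σ.idxOf z < σ.idxOf a →
      ∀ w ∈ earlierNeighbors G σ c, z ≠ w → G.Adj z w)
    (huv : σ.idxOf u < σ.idxOf v) :
    ∃ d, σ.idxOf d < σ.idxOf v ∧ G.Adj d v ∧ ¬ G.Adj d c := by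
  have hn := h.lt_length
  have hm := h.zero_lt_peak
  -- the rising flank `P[0], …, P[m]` crosses the level of `v` between `P[k]` and `P[k + 1]`
  obtain ⟨k, -, ⟨hkm, hkv⟩, hk1⟩ := Nat.exists_lt_and_not_succ
    (p := fun j => ∃ hj : j < m, σ.idxOf P[j] < σ.idxOf v) ⟨hm, h.getElem_zero ▸ huv⟩
    (fun ⟨hmm, _⟩ => lt_irrefl m hmm)
  rw [← h.getElem_last] at hkv hk1 ⊢
  have hnkv : ¬ G.Adj P[k] P[P.length - 1] := by rw [h.induced.2]; omega
  by_cases hkm1 : k + 1 = m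
  · have hkc : G.Adj P[k] c := by
      simpa only [hkm1, h.getElem_peak] using h.induced.adj_succ k (by omega)
    exact hσ.exists_adj_not_adj hkv (h.idxOf_lt_peak _ (by omega)) hkc hnkv
  have hvk1 : σ.idxOf P[P.length - 1] < σ.idxOf P[k + 1] := by
    refine lt_of_le_of_ne (not_lt.1 fun h' => hk1 ⟨by omega, h'⟩) fun he => ?_
    have := h.induced.1.getElem_inj_iff.1 ((List.idxOf_inj (hσ.2 _)).1 he)
    omega
  obtain ⟨d, hdv, hdadj, hdk1⟩ :=
    hσ.exists_adj_not_adj hkv hvk1 (h.induced.adj_succ k (by omega)) hnkv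
  refine ⟨d, hdv, hdadj, fun hdc => hdk1 ?_⟩
  -- `d` lies below `a`, so by the minimality of `a` it is adjacent to `P[m - 1]`; walking down
  -- the rising flank with the clique property below `c`, it is adjacent to `P[k + 1]`.
  have hda : σ.idxOf d < σ.idxOf a := by
    rcases h.nbr with ha | ha <;> rw [← ha] <;> refine hdv.trans_le ?_
    · exact hvk1.le.trans (h.asc_le (by omega) (by omega) (by omega))
    · exact h.desc_le (i := m + 1) (by omega) (by omega) (by omega)
  have hpred : P[m - 1] ∈ earlierNeighbors G σ c := by
    refine ⟨h.idxOf_lt_peak _ (by omega), ?_⟩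
    simpa only [Nat.sub_add_cancel hm, h.getElem_peak] using h.induced.adj_succ (m - 1) (by omega)
  have hdk1' : σ.idxOf d < σ.idxOf P[k + 1] := hdv.trans hvk1
  refine h.adj_of_adj_of_le hclq (j := m - 1) (by omega) (by omega) (by omega) hdk1' ?_
  refine hlow d ⟨lt_trans hdk1' (hpred.1.trans_le' (h.asc_le (by omega) (by omega) (by omega))),
    hdc⟩ hda _ hpred fun he => ?_
  rw [he] at hdk1'
  exact absurd (h.asc_le (by omega) (by omega) (by omega)) (not_le.2 hdk1')

theorem triple {b : V} (ha : a ∈ earlierNeighbors G σ c) (hb : b ∈ earlierNeighbors G σ c)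
    (hab : a ≠ b) (hnab : ¬ G.Adj a b) : IsPeakPath G σ c a b a [b, c, a] 1 where
  induced := by
    have hnba : ¬ G.Adj b a := fun h => hnab h.symm
    refine ⟨by simp [hb.2.ne, hab.symm, ha.2.ne.symm], ?_⟩
    intro i j hi hj
    simp only [List.length_cons, List.length_nil] at hi hj
    interval_cases i <;> interval_cases j <;>
      simp [ha.2, hb.2, ha.2.symm, hb.2.symm, hnab, hnba]
  zero_lt_peak := Nat.one_pos
  lt_length := by simp
  getElem_peak := rfl
  getElem_zero := rfl
  getElem_last := rfl
  asc i j hij hj := by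
    obtain ⟨rfl, rfl⟩ : i = 0 ∧ j = 1 := by omega
    exact hb.1
  desc i j hij hj hi := by
    simp only [List.length_cons, List.length_nil] at hj
    obtain ⟨rfl, rfl⟩ : i = 1 ∧ j = 2 := by omega
    exact ha.1
  nbr := Or.inr rfl

theorem exists_lower_end [DecidableRel G.Adj] (h : IsPeakPath G σ c a u v P m)
    (hG : IsChordal G) (hσ : IsMCSOrder G σ)
    (hclq : ∀ c', σ.idxOf c' < σ.idxOf c → G.IsClique (earlierNeighbors G σ c'))
    (hlow : ∀ z ∈ earlierNeighbors G σ c, σ.idxOf z < σ.idxOf a →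
      ∀ w ∈ earlierNeighbors G σ c, z ≠ w → G.Adj z w)
    (huv : σ.idxOf u < σ.idxOf v) :
    ∃ d P', σ.idxOf d < σ.idxOf v ∧ IsPeakPath G σ c a u d P' m := by
  classical
  have hn := h.lt_length
  obtain ⟨d, hdv, hdv', hdc⟩ := h.exists_adj_not_adj hσ hclq hlow huv
  rw [← h.getElem_last] at hdv'
  have hdP : d ∉ P := by
    intro hd
    obtain ⟨i, hi, rfl⟩ := List.mem_iff_getElem.1 hd
    have := (h.induced.2 i _ hi (by omega)).1 hdv'
    have := h.desc i (P.length - 1) (by omega) (by omega) (by omega)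
    rw [h.getElem_last] at this
    omega
  -- a neighbour `P[i]`, `i ≤ m`, would make `d` adjacent to both ends of `P.drop i`, hence to `c`
  have hleft : ∀ i (hi : i ≤ m), ¬ G.Adj d P[i] := by
    intro i hi hdi
    have := hG.adj_of_isInducedPath (h.induced.drop i) (fun h' => hdP (List.mem_of_mem_drop h'))
      (by grind) (by simpa using hdi)
      (by simpa [show i + (P.length - i - 1) = P.length - 1 by omega] using hdv') (m - i)
      (by grind)
    simp only [List.getElem_drop, show i + (m - i) = m by omega, h.getElem_peak] at this
    exact hdc this
  have hex : ∃ k, ∃ hk : k < P.length, G.Adj P[k] d := ⟨_, by omega, hdv'.symm⟩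
  obtain ⟨hk, hkd⟩ := Nat.find_spec hex
  have hmk : m < Nat.find hex := by
    by_contra
    exact hleft _ (by omega) hkd.symm
  refine ⟨d, _, hdv, h.take_append hmk hk hdP (fun i hi => ⟨fun hid => ?_, ?_⟩) hdv⟩
  · by_contra hik
    exact Nat.find_min hex (by omega) ⟨by omega, hid⟩
  · rintro rfl
    exact hkd

theorem not_isPeakPath_of_chordal [DecidableRel G.Adj] (hG : IsChordal G) (hσ : IsMCSOrder G σ)
    (hclq : ∀ c', σ.idxOf c' < σ.idxOf c → G.IsClique (earlierNeighbors G σ c'))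
    (hlow : ∀ z ∈ earlierNeighbors G σ c, σ.idxOf z < σ.idxOf a →
      ∀ w ∈ earlierNeighbors G σ c, z ≠ w → G.Adj z w) :
    ¬ IsPeakPath G σ c a u v P m := by
  induction hs : σ.idxOf u + σ.idxOf v using Nat.strong_induction_on generalizing u v P m with
  | _ s ih =>
  intro h
  have hn := h.lt_length
  have huv : σ.idxOf u ≠ σ.idxOf v := by
    have := h.induced.1.getElem_inj_iff (i := 0) (j := P.length - 1) (hi := by omega)
      (hj := by omega)
    rw [h.getElem_zero, h.getElem_last] at this
    rw [Ne, List.idxOf_inj (hσ.2 u), this]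
    omega
  rcases Nat.lt_or_gt_of_ne huv with huv | huv
  · obtain ⟨d, P', hdv, h'⟩ := h.exists_lower_end hG hσ hclq hlow huv
    exact ih _ (by omega) rfl h'
  · obtain ⟨d, P', hdu, h'⟩ := h.reverse.exists_lower_end hG hσ hclq hlow huv
    exact ih _ (by omega) rfl h'

end IsPeakPath

theorem IsMCSOrder.isClique_earlierNeighbors [DecidableRel G.Adj] (hG : IsChordal G)
    (hσ : IsMCSOrder G σ) (c : V) : G.IsClique (earlierNeighbors G σ c) := by
  induction hn : σ.idxOf c using Nat.strong_induction_on generalizing c with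
  | _ n ih =>
  subst hn
  have hclq : ∀ c', σ.idxOf c' < σ.idxOf c → G.IsClique (earlierNeighbors G σ c') :=
    fun c' hc' => ih _ hc' c' rfl
  by_contra hnot
  have hbad : ∃ z ∈ earlierNeighbors G σ c, ∃ w ∈ earlierNeighbors G σ c, z ≠ w ∧ ¬ G.Adj z w := by
    simpa only [IsClique, Set.Pairwise, not_forall, exists_prop] using hnot
  obtain ⟨a, ⟨ha, b, hb, hab, hnab⟩, hmin⟩ := (measure σ.idxOf).wf.has_min
    {z ∈ earlierNeighbors G σ c | ∃ w ∈ earlierNeighbors G σ c, z ≠ w ∧ ¬ G.Adj z w} hbad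
  refine IsPeakPath.not_isPeakPath_of_chordal hG hσ hclq (fun z hz hza w hw hzw => ?_)
    (IsPeakPath.triple ha hb hab hnab)
  by_contra hzw'
  exact hmin z ⟨hz, w, hw, hzw, hzw'⟩ hza

theorem IsMCSOrder.idxOf_lt_succ_of_isInducedPath [DecidableRel G.Adj] (hσ : IsMCSOrder G σ)
    (hG : IsChordal G) {P : List V} (hP : IsInducedPath G P) (h1 : 1 < P.length)
    (h01 : σ.idxOf P[0] < σ.idxOf P[1]) :
    ∀ i (hi : i + 1 < P.length), σ.idxOf P[i] < σ.idxOf P[i + 1] := by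
  intro i hi
  induction i with
  | zero => exact h01
  | succ i ih =>
    have ih := ih (by omega)
    refine lt_of_le_of_ne (not_lt.1 fun hlt => ?_) fun he => ?_
    · have := hσ.isClique_earlierNeighbors hG P[i + 1] ⟨ih, hP.adj_succ i (by omega)⟩
        ⟨hlt, (hP.adj_succ (i + 1) hi).symm⟩ (by rw [Ne, hP.1.getElem_inj_iff]; omega)
      rw [hP.2] at this
      omega
    · rw [List.idxOf_inj (hσ.2 _), hP.1.getElem_inj_iff] at he
      omega

end Chordal

theorem stmt6_general {V : Type} [DecidableEq V] (G : SimpleGraph V)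
    [DecidableRel G.Adj] (hchordal : IsChordal G)
    (τ : List V)
    (x y : V) (hx : x ∉ τ) (hy : y ∉ τ) (hne : x ≠ y)
    (hconn : (G.induce {w : V | w ∉ τ}).Reachable ⟨x, hx⟩ ⟨y, hy⟩) :
    ¬ ∃ D : V → V → Prop,
        ExtendableFrom G (τ ++ [x]) D ∧ ExtendableFrom G (τ ++ [y]) D := by
  rintro ⟨D, ⟨σ, hσ, hpre, hD⟩, ⟨σ', hσ', hpre', hD'⟩⟩
  obtain ⟨P, hP0, hP, rfl, rfl, hPτ⟩ := hconn.exists_isInducedPath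
  have hP1 : 1 < P.length := by
    by_contra
    exact hne (by congr 1; omega)
  have hlast : P[P.length - 2 + 1] = P[P.length - 1] := by congr 1; omega
  have hup := hσ.idxOf_lt_succ_of_isInducedPath hchordal hP hP1
    (hpre.idxOf_lt_idxOf_of_concat hx (hPτ _ (List.getElem_mem _))
      (hP.1.getElem_inj_iff.not.2 one_ne_zero)) (P.length - 2) (by omega)
  have hdown := hpre'.idxOf_lt_idxOf_of_concat (w := P[P.length - 2]) hy
    (hPτ _ (List.getElem_mem _)) (hP.1.getElem_inj_iff.not.2 (by omega))
  rw [hlast] at hup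
  have hadj := hlast ▸ hP.adj_succ (P.length - 2) (by omega)
  exact absurd ((hD' _ _).1 ((hD _ _).2 ⟨hadj, hup⟩)).2 (not_lt.2 hdown.le)

/-- If `x` and `y` both lie in the highest-label set after the MCS prefix `τ`
and are connected in the induced subgraph on the unvisited vertices, then the
AMOs extendable from `τ ++ [x]` are disjoint from those extendable from
`τ ++ [y]`. -/
theorem stmt6 {V : Type} [Fintype V] [DecidableEq V] (G : SimpleGraph V)
    [DecidableRel G.Adj] (hchordal : IsChordal G)
    (τ : List V) (hτ : IsMCSPrefix G τ) (hlen : τ.length < Fintype.card V)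
    (x y : V) (hx : x ∉ τ) (hy : y ∉ τ) (hne : x ≠ y)
    (hxmax : ∀ w : V, w ∉ τ → mcsLabel G τ w ≤ mcsLabel G τ x)
    (hymax : ∀ w : V, w ∉ τ → mcsLabel G τ w ≤ mcsLabel G τ y)
    (hconn : (G.induce {w : V | w ∉ τ}).Reachable ⟨x, hx⟩ ⟨y, hy⟩) :
    ¬ ∃ D : V → V → Prop,
        ExtendableFrom G (τ ++ [x]) D ∧ ExtendableFrom G (τ ++ [y]) D :=
  stmt6_general G hchordal τ x y hx hy hne hconn
end

section
/- Let D be a DAG and let x → y be a covered edge of D (i.e., Pa(x) ∪ {x} = Pa(y)). Then the graph D' obtained by reversing this single edge to y → x is also a DAG, and D' has the same skeleton and the same set of v-structures as D; consequently D and D' are Markov equivalent. -/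
/-!
Write `E` for `D` with the edge `x → y` deleted, so that the reversed graph is `E` plus `y → x`.
A cycle through the new edge `y → x` needs an `E`-path from `x` to `y`; its last edge `z → y` has
`z ≠ x`, so coveredness gives `z → x`, closing a cycle in `D`. The skeleton is unchanged since only
the orientation of one edge changes. A v-structure `a → c ← b` cannot use the edge `x → y`, because
`b → y` would force `b → x` or `b = x`, making `a` and `b` adjacent or equal; symmetrically for the
new edge `y → x`.
-/

open Relation

namespace Relation

variable {V : Type*}

def deleteEdge (r : V → V → Prop) (x y : V) : V → V → Prop :=
  fun u v => r u v ∧ ¬(u = x ∧ v = y)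

def addEdge (r : V → V → Prop) (x y : V) : V → V → Prop :=
  fun u v => r u v ∨ (u = x ∧ v = y)

def reverseEdge (r : V → V → Prop) (x y : V) : V → V → Prop :=
  addEdge (deleteEdge r x y) y x

def IsAcyclic (r : V → V → Prop) : Prop :=
  ∀ v, ¬TransGen r v v

/-- `x → y` is covered: `Pa(y) = Pa(x) ∪ {x}`. -/
def IsCoveredEdge (r : V → V → Prop) (x y : V) : Prop :=
  ∀ z, r z y ↔ r z x ∨ z = x

def IsVStructure (r : V → V → Prop) (a b c : V) : Prop :=
  a ≠ b ∧ ¬SymmGen r a b ∧ r a c ∧ r b c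

variable {r : V → V → Prop} {x y : V}

theorem IsCoveredEdge.rel (h : IsCoveredEdge r x y) : r x y :=
  (h x).2 (Or.inr rfl)

theorem transGen_addEdge {a b : V} (h : TransGen (addEdge r x y) a b) :
    TransGen r a b ∨ (ReflTransGen r a x ∧ ReflTransGen r y b) := by
  induction h with
  | single h =>
    rcases h with h | ⟨rfl, rfl⟩
    · exact .inl (.single h)
    · exact .inr ⟨.refl, .refl⟩
  | tail _ hbc ih =>
    rcases hbc with hbc | ⟨rfl, rfl⟩
    · rcases ih with ih | ⟨hax, hyb⟩
      · exact .inl (ih.tail hbc)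
      · exact .inr ⟨hax, hyb.tail hbc⟩
    · rcases ih with ih | ⟨hax, -⟩
      · exact .inr ⟨ih.to_reflTransGen, .refl⟩
      · exact .inr ⟨hax, .refl⟩

theorem IsAcyclic.addEdge (hr : IsAcyclic r) (hyx : ¬ReflTransGen r y x) :
    IsAcyclic (addEdge r x y) := by
  intro v hv
  rcases transGen_addEdge hv with h | ⟨hvx, hyv⟩
  · exact hr v h
  · exact hyx (hyv.trans hvx)

theorem IsAcyclic.not_reflTransGen_deleteEdge (hr : IsAcyclic r) (hxy : IsCoveredEdge r x y) :
    ¬ReflTransGen (deleteEdge r x y) x y := by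
  intro hpath
  rcases hpath.cases_tail with hyx | ⟨z, hxz, hzy, hne⟩
  · exact hr x (.single (hyx ▸ hxy.rel))
  have hzx : r z x := ((hxy z).1 hzy).resolve_right fun h => hne ⟨h, rfl⟩
  exact hr x (.tail' (ReflTransGen.mono (fun _ _ h => h.1) _ _ hxz) hzx)

theorem IsAcyclic.mono {s : V → V → Prop} (hr : IsAcyclic r) (hsr : s ≤ r) : IsAcyclic s :=
  fun v hv => hr v (TransGen.mono hsr _ _ hv)

theorem IsAcyclic.reverseEdge (hr : IsAcyclic r) (hxy : IsCoveredEdge r x y) :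
    IsAcyclic (reverseEdge r x y) :=
  (hr.mono fun _ _ h => h.1).addEdge (hr.not_reflTransGen_deleteEdge hxy)

theorem symmGen_reverseEdge_iff (hxy : r x y) {u v : V} :
    SymmGen (reverseEdge r x y) u v ↔ SymmGen r u v := by
  simp only [SymmGen, reverseEdge, addEdge, deleteEdge]
  constructor
  · rintro ((⟨h, -⟩ | ⟨rfl, rfl⟩) | (⟨h, -⟩ | ⟨rfl, rfl⟩))
    exacts [.inl h, .inr hxy, .inr h, .inl hxy]
  · rintro (h | h)
    · by_cases hx : u = x ∧ v = y
      · exact .inr (.inr ⟨hx.2, hx.1⟩)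
      · exact .inl (.inl ⟨h, hx⟩)
    · by_cases hx : v = x ∧ u = y
      · exact .inl (.inr ⟨hx.2, hx.1⟩)
      · exact .inr (.inl ⟨h, hx⟩)

theorem reverseEdge_of_rel_of_not_symmGen (hxy : IsCoveredEdge r x y) {a b c : V} (hab : a ≠ b)
    (hadj : ¬SymmGen r a b) (hac : r a c) (hbc : r b c) :
    reverseEdge r x y a c := by
  refine .inl ⟨hac, ?_⟩
  rintro ⟨rfl, rfl⟩
  rcases (hxy b).1 hbc with hbx | rfl
  exacts [hadj (.inr hbx), hab rfl]

theorem rel_of_reverseEdge_of_not_symmGen (hxy : IsCoveredEdge r x y) {a b c : V} (hab : a ≠ b)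
    (hadj : ¬SymmGen r a b) (hac : reverseEdge r x y a c) (hbc : reverseEdge r x y b c) : r a c := by
  rcases hac with ⟨hac, -⟩ | ⟨rfl, rfl⟩
  · exact hac
  rcases hbc with ⟨hbx, -⟩ | ⟨rfl, -⟩
  exacts [absurd (.inr ((hxy b).2 (.inl hbx))) hadj, absurd rfl hab]

theorem isVStructure_reverseEdge_iff (hxy : IsCoveredEdge r x y) {a b c : V} :
    IsVStructure (reverseEdge r x y) a b c ↔ IsVStructure r a b c := by
  simp only [IsVStructure, symmGen_reverseEdge_iff hxy.rel]
  constructor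
  · rintro ⟨hab, hadj, hac, hbc⟩
    exact ⟨hab, hadj, rel_of_reverseEdge_of_not_symmGen hxy hab hadj hac hbc,
      rel_of_reverseEdge_of_not_symmGen hxy hab.symm (fun h => hadj h.symm) hbc hac⟩
  · rintro ⟨hab, hadj, hac, hbc⟩
    exact ⟨hab, hadj, reverseEdge_of_rel_of_not_symmGen hxy hab hadj hac hbc,
      reverseEdge_of_rel_of_not_symmGen hxy hab.symm (fun h => hadj h.symm) hbc hac⟩

end Relation

theorem stmt9_general {V : Type} (D : V → V → Prop)
    (hacyc : ∀ v : V, ¬ Relation.TransGen D v v)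
    (x y : V)
    (hcov : ∀ z : V, D z y ↔ (D z x ∨ z = x)) :
    ∀ D' : V → V → Prop,
      (∀ u v, D' u v ↔ ((D u v ∧ ¬(u = x ∧ v = y)) ∨ (u = y ∧ v = x))) →
      (∀ v : V, ¬ Relation.TransGen D' v v) ∧
      (∀ u v : V, (D u v ∨ D v u) ↔ (D' u v ∨ D' v u)) ∧
      (∀ a b c : V,
        (a ≠ b ∧ ¬ (D a b ∨ D b a) ∧ D a c ∧ D b c) ↔
        (a ≠ b ∧ ¬ (D' a b ∨ D' b a) ∧ D' a c ∧ D' b c)) := by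
  intro D' hD'
  obtain rfl : D' = reverseEdge D x y := funext₂ fun u v => propext (hD' u v)
  have hcov : IsCoveredEdge D x y := hcov
  exact ⟨IsAcyclic.reverseEdge hacyc hcov, fun u v => (symmGen_reverseEdge_iff hcov.rel).symm,
    fun a b c => (isVStructure_reverseEdge_iff hcov).symm⟩

/-- Reversing a covered edge `x → y` (i.e. `Pa(y) = Pa(x) ∪ {x}`) of a DAG
yields a DAG with the same skeleton and the same v-structures; consequently the
two DAGs are Markov equivalent. -/
theorem stmt9 {V : Type} (D : V → V → Prop)
    (hacyc : ∀ v : V, ¬ Relation.TransGen D v v)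
    (x y : V) (hxy : D x y)
    (hcov : ∀ z : V, D z y ↔ (D z x ∨ z = x)) :
    ∀ D' : V → V → Prop,
      (∀ u v, D' u v ↔ ((D u v ∧ ¬(u = x ∧ v = y)) ∨ (u = y ∧ v = x))) →
      (∀ v : V, ¬ Relation.TransGen D' v v) ∧
      (∀ u v : V, (D u v ∨ D v u) ↔ (D' u v ∨ D' v u)) ∧
      (∀ a b c : V,
        (a ≠ b ∧ ¬ (D a b ∨ D b a) ∧ D a c ∧ D b c) ↔
        (a ≠ b ∧ ¬ (D' a b ∨ D' b a) ∧ D' a c ∧ D' b c)) :=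
  stmt9_general D hacyc x y hcov
end

section
/- Reversing a non-covered edge x → y of a DAG D either creates a directed cycle or changes the set of v-structures: if there is a parent z of y with z ≠ x and z not a parent of x, or a parent z of x that is not a parent of y, then the graph D' obtained by reversing x → y is not Markov equivalent to D (or not acyclic). -/
/-- Reversing a non-covered edge `x → y` of a DAG `D` — witnessed by a parent
`z` of `y` with `z ≠ x` that is not a parent of `x`, or a parent `z` of `x`
that is not a parent of `y` — yields a graph `D'` that either contains a
directed cycle or has a different set of v-structures, hence is not Markov
equivalent to `D` (or not acyclic). -/
theorem stmt10 {V : Type} (D : V → V → Prop)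
    (hacyc : ∀ v : V, ¬ Relation.TransGen D v v)
    (x y : V) (hxy : D x y)
    (hnotcov : (∃ z : V, D z y ∧ z ≠ x ∧ ¬ D z x) ∨ (∃ z : V, D z x ∧ ¬ D z y)) :
    ∀ D' : V → V → Prop,
      (∀ u v, D' u v ↔ ((D u v ∧ ¬(u = x ∧ v = y)) ∨ (u = y ∧ v = x))) →
      (∃ v : V, Relation.TransGen D' v v) ∨
      ∃ a b c : V,
        ¬ ((a ≠ b ∧ ¬ (D a b ∨ D b a) ∧ D a c ∧ D b c) ↔
           (a ≠ b ∧ ¬ (D a b ∨ D b a) ∧ D' a c ∧ D' b c)) := by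
  intro D' hD'
  have hxney : x ≠ y := by
    intro h; subst h; exact hacyc x (Relation.TransGen.single hxy)
  have hnyx : ¬ D y x := fun h =>
    hacyc x (Relation.TransGen.head hxy (Relation.TransGen.single h))
  have hD'yx : D' y x := (hD' y x).mpr (Or.inr ⟨rfl, rfl⟩)
  rcases hnotcov with ⟨z, hzy, hzx, hnzx⟩ | ⟨z, hzx, hnzy⟩
  · by_cases hxz : D x z
    · -- cycle y → x → z → y in D'
      left
      refine ⟨y, Relation.TransGen.head hD'yx (Relation.TransGen.head
        (b := z) ?_ (Relation.TransGen.single ?_))⟩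
      · exact (hD' x z).mpr (Or.inl ⟨hxz, fun h => by
          have : D y y := h.2 ▸ hzy
          exact hacyc y (Relation.TransGen.single this)⟩)
      · exact (hD' z y).mpr (Or.inl ⟨hzy, fun h => hzx h.1⟩)
    · -- v-structure z → y ← x in D but not in D'
      right
      refine ⟨z, x, y, fun hiff => ?_⟩
      have hQ := hiff.mp ⟨hzx, fun h => h.elim hnzx hxz, hzy, hxy⟩
      have : D' x y := hQ.2.2.2
      rcases (hD' x y).mp this with ⟨_, h⟩ | ⟨h, _⟩
      · exact h ⟨rfl, rfl⟩
      · exact hxney h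
  · -- z → x, ¬ z → y : v-structure z → x ← y in D' but not in D
    right
    have hzney : z ≠ y := by
      intro h; subst h
      exact hacyc x (Relation.TransGen.head hxy (Relation.TransGen.single hzx))
    have hnyz : ¬ D y z := fun h =>
      hacyc y (Relation.TransGen.head h (Relation.TransGen.head hzx
        (Relation.TransGen.single hxy)))
    have hD'zx : D' z x := (hD' z x).mpr (Or.inl ⟨hzx, fun h => hxney h.2⟩)
    refine ⟨z, y, x, fun hiff => ?_⟩
    have hP := hiff.mpr ⟨hzney, fun h => h.elim hnzy hnyz, hD'zx, hD'yx⟩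
    exact hnyx hP.2.2.2
end

section
/- Two directed trees (orientations of the same undirected tree in which every vertex has in-degree at most 1) with no v-structures are each uniquely determined by their root (the unique vertex of in-degree 0), and two such orientations of the same tree are Markov equivalent; moreover, reversing the edge between the root r and a neighbor s yields the orientation rooted at s. -/
open SimpleGraph

/-- `D` has no v-structure `a → c ← b` with `a, b` nonadjacent. -/
def NoVStructure {V : Type} (G : SimpleGraph V) (D : V → V → Prop) : Prop :=
  ¬ ∃ a b c : V, a ≠ b ∧ ¬ G.Adj a b ∧ D a c ∧ D b c

/-- parent existence: any vertex at distance `n+1` from `r` has a neighbor at distance `n`. -/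
lemma exists_parent {V : Type} {T : SimpleGraph V} (hc : T.Connected) {r v : V} {n : ℕ}
    (h : T.dist r v = n + 1) : ∃ w, T.Adj w v ∧ T.dist r w = n := by
  obtain ⟨p, hp⟩ := (hc r v).exists_walk_length_eq_dist
  have hq : (p.reverse).length = n + 1 := by
    rw [SimpleGraph.Walk.length_reverse, hp, h]
  cases hq' : p.reverse with
  | nil => rw [hq'] at hq; simp at hq
  | cons hadj q' =>
    rename_i w
    rw [hq'] at hq
    simp only [SimpleGraph.Walk.length_cons, Nat.add_right_cancel_iff] at hq
    have h1 : T.dist r w ≤ n := by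
      have := SimpleGraph.dist_le q'.reverse
      rwa [SimpleGraph.Walk.length_reverse, hq] at this
    have h2 : T.dist r v ≤ T.dist r w + 1 := by
      have ht := hc.dist_triangle (u := r) (v := w) (w := v)
      have : T.dist w v = 1 := SimpleGraph.dist_eq_one_iff_adj.mpr hadj.symm
      omega
    exact ⟨w, hadj.symm, by omega⟩

/-- every non-root vertex at distance `n+1` has an in-edge from a vertex at distance `n`. -/
lemma in_edge_from_parent {V : Type} {T : SimpleGraph V} (hc : T.Connected)
    {D : V → V → Prop} (hD : IsOrientation T D)
    (hin : ∀ v a b : V, D a v → D b v → a = b)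
    {r : V} (hr : ∀ u : V, ¬ D u r) :
    ∀ n : ℕ, ∀ v : V, T.dist r v = n + 1 → ∃ w, D w v ∧ T.dist r w = n := by
  intro n
  induction n using Nat.strong_induction_on with
  | _ n ih =>
    intro v hv
    obtain ⟨w, hadj, hw⟩ := exists_parent hc hv
    by_cases hDwv : D w v
    · exact ⟨w, hDwv, hw⟩
    · have hDvw : D v w := by
        have := (hD.2 w v hadj).mp
        by_contra hvw
        exact hDwv ((hD.2 w v hadj).mpr (by
          intro hDvw'; exact hvw hDvw'))
      cases n with
      | zero =>
        have : w = r := (((hc r w).dist_eq_zero_iff).mp hw).symm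
        exact absurd (this ▸ hDvw) (hr v)
      | succ m =>
        obtain ⟨w', hDw'w, hw'⟩ := ih m (by omega) w hw
        have : v = w' := hin w v w' hDvw hDw'w
        rw [this] at hv
        omega

/-- the orientation is determined: edges point away from the root. -/
lemma away_from_root {V : Type} {T : SimpleGraph V} (hc : T.Connected)
    {D : V → V → Prop} (hD : IsOrientation T D)
    (hin : ∀ v a b : V, D a v → D b v → a = b)
    {r : V} (hr : ∀ u : V, ¬ D u r) :
    ∀ u v : V, D u v ↔ T.Adj u v ∧ T.dist r u + 1 = T.dist r v := by
  have key : ∀ u v : V, D u v → T.Adj u v ∧ T.dist r u + 1 = T.dist r v := by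
    intro u v hDuv
    have hadj := hD.1 u v hDuv
    have hvne : v ≠ r := by rintro rfl; exact hr u hDuv
    have hdpos : T.dist r v ≠ 0 := by
      intro h0
      exact hvne (((hc r v).dist_eq_zero_iff).mp h0).symm
    obtain ⟨n, hn⟩ : ∃ n, T.dist r v = n + 1 := ⟨T.dist r v - 1, by omega⟩
    obtain ⟨w, hDwv, hw⟩ := in_edge_from_parent hc hD hin hr n v hn
    have : u = w := hin v u w hDuv hDwv
    exact ⟨hadj, by rw [this, hw, hn]⟩
  intro u v
  constructor
  · exact key u v
  · rintro ⟨hadj, hdist⟩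
    by_contra hDuv
    have hDvu : D v u := (hD.2 v u hadj.symm).mpr (by intro h; exact hDuv h)
    have := (key v u hDvu).2
    omega

/-- For a finite tree `T`:  any orientation with in-degree at most 1 and no
v-structures has a unique root (vertex of in-degree 0); two such orientations
with the same root are equal; any two such orientations are Markov equivalent
(same skeleton and same v-structures); and reversing the edge between the root
`r` and a neighbor `s` yields the orientation rooted at `s`. -/
theorem stmt11 {V : Type} [Fintype V] (T : SimpleGraph V) (hT : T.IsTree)
    (D D' : V → V → Prop)
    (hD : IsOrientation T D) (hD' : IsOrientation T D')
    (hin : ∀ v a b : V, D a v → D b v → a = b)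
    (hin' : ∀ v a b : V, D' a v → D' b v → a = b)
    (hv : NoVStructure T D) (hv' : NoVStructure T D') :
    (∃! r : V, ∀ u : V, ¬ D u r) ∧
    (∀ r : V, (∀ u : V, ¬ D u r) → (∀ u : V, ¬ D' u r) → D = D') ∧
    ((∀ a b : V, (D a b ∨ D b a) ↔ (D' a b ∨ D' b a)) ∧
      (∀ a b c : V,
        (a ≠ b ∧ ¬ T.Adj a b ∧ D a c ∧ D b c) ↔
        (a ≠ b ∧ ¬ T.Adj a b ∧ D' a c ∧ D' b c))) ∧
    (∀ r s : V, (∀ u : V, ¬ D u r) → T.Adj r s →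
      ∀ D'' : V → V → Prop,
        (∀ u v, D'' u v ↔ ((D u v ∧ ¬(u = r ∧ v = s)) ∨ (u = s ∧ v = r))) →
        (∀ u : V, ¬ D'' u s)) := by
  classical
  have hc : T.Connected := hT.isConnected
  have hne : Nonempty V := hc.nonempty
  -- existence of a root
  have hex : ∃ r : V, ∀ u : V, ¬ D u r := by
    by_contra hno
    push_neg at hno
    choose f hf using hno
    have hinj : Function.Injective fun v => s(f v, v) := by
      intro v1 v2 h
      simp only [Sym2.eq, Sym2.rel_iff', Prod.mk.injEq, Prod.swap_prod_mk] at h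
      rcases h with ⟨h1, h2⟩ | ⟨h1, h2⟩
      · exact h2
      · exfalso
        have hadj := hD.1 _ _ (hf v1)
        have := (hD.2 _ _ hadj).mp (hf v1)
        rw [h1] at this
        exact this (by rw [h2]; exact hf v2)
    have hmaps : ∀ v : V, s(f v, v) ∈ T.edgeFinset := by
      intro v
      rw [SimpleGraph.mem_edgeFinset, SimpleGraph.mem_edgeSet]
      exact hD.1 _ _ (hf v)
    have hcard : Fintype.card V ≤ T.edgeFinset.card := by
      have := Finset.card_le_card_of_injOn (s := Finset.univ) (fun v => s(f v, v))
        (fun v _ => hmaps v) (hinj.injOn)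
      simpa using this
    have := hT.card_edgeFinset
    have : 0 < Fintype.card V := Fintype.card_pos
    omega
  obtain ⟨r, hr⟩ := hex
  have away := away_from_root hc hD hin hr
  refine ⟨⟨r, hr, ?_⟩, ?_, ⟨?_, ?_⟩, ?_⟩
  · -- uniqueness of root
    intro r' hr'
    by_contra hner
    have hd0 : T.dist r r' ≠ 0 := by
      intro h0
      exact hner (((hc r r').dist_eq_zero_iff).mp h0).symm
    obtain ⟨n, hn⟩ : ∃ n, T.dist r r' = n + 1 := ⟨T.dist r r' - 1, by omega⟩
    obtain ⟨w, hDw, _⟩ := in_edge_from_parent hc hD hin hr n r' hn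
    exact hr' w hDw
  · -- same root implies equal
    intro r0 hr0 hr0'
    have a1 := away_from_root hc hD hin hr0
    have a2 := away_from_root hc hD' hin' hr0'
    funext u v
    exact propext ((a1 u v).trans (a2 u v).symm)
  · -- same skeleton
    intro a b
    have h1 : (D a b ∨ D b a) ↔ T.Adj a b := by
      constructor
      · rintro (h | h)
        · exact hD.1 a b h
        · exact (hD.1 b a h).symm
      · intro hadj
        by_cases h : D a b
        · exact Or.inl h
        · exact Or.inr ((hD.2 b a hadj.symm).mpr (fun h' => h h'))
    have h2 : (D' a b ∨ D' b a) ↔ T.Adj a b := by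
      constructor
      · rintro (h | h)
        · exact hD'.1 a b h
        · exact (hD'.1 b a h).symm
      · intro hadj
        by_cases h : D' a b
        · exact Or.inl h
        · exact Or.inr ((hD'.2 b a hadj.symm).mpr (fun h' => h h'))
    exact h1.trans h2.symm
  · -- same v-structures (there are none)
    intro a b c
    constructor
    · rintro ⟨h1, h2, h3, h4⟩
      exact absurd ⟨a, b, c, h1, h2, h3, h4⟩ hv
    · rintro ⟨h1, h2, h3, h4⟩
      exact absurd ⟨a, b, c, h1, h2, h3, h4⟩ hv'
  · -- reversal
    intro r0 s hr0 hrs D'' hDD u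
    rw [hDD]
    rintro (⟨hDus, hne'⟩ | ⟨rfl, rfl⟩)
    · have hDr0s : D r0 s := (hD.2 r0 s hrs).mpr (hr0 s)
      have : u = r0 := hin s u r0 hDus hDr0s
      exact hne' ⟨this, rfl⟩
    · exact hrs.ne' rfl
end

section
/- For an undirected tree T on n vertices, the number of DAGs Markov equivalent to any fixed v-structure-free orientation of T equals n, and the graph on these DAGs with edges between DAGs at structural Hamming distance 1 is isomorphic to T itself. -/
/-!
A v-structure-free orientation of a tree has a source `r`: the tree has only `n - 1` edges, too
few for every vertex to be entered by one. Every other vertex `v` is then entered from its parent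
with respect to `r`, by induction on the distance to `r`: otherwise the parent of the tail of the
arc into `v` would form a v-structure with it. So the class consists of the orientations away
from the `n` vertices, and each of these is v-structure-free because parents are unique in a tree.

The orientations away from `r ≠ s` disagree on the arc into `s` and on the arc out of `r` along
the `r`–`s` path. These two arcs coincide exactly when `r` and `s` are adjacent, and then every
arc pointing away from `r` and towards `s` is that single edge.
-/

/-- Boolean-valued orientation of the edges of `G`. -/
def IsOrientationB {V : Type} (G : SimpleGraph V) (D : V → V → Bool) : Prop :=
  (∀ u v, D u v = true → G.Adj u v) ∧
  (∀ u v, G.Adj u v → (D u v = true ↔ D v u = false))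

/-- No v-structure `a → c ← b` with `a, b` nonadjacent. -/
def NoVStructureB {V : Type} (G : SimpleGraph V) (D : V → V → Bool) : Prop :=
  ¬ ∃ a b c : V, a ≠ b ∧ ¬ G.Adj a b ∧ D a c = true ∧ D b c = true

/-- Structural Hamming distance between two orientations of the same skeleton:
the number of edges oriented differently. -/
noncomputable def shd {V : Type} (D₁ D₂ : V → V → Bool) : ℕ :=
  Set.ncard {p : V × V | D₁ p.1 p.2 = true ∧ D₂ p.1 p.2 = false}

namespace SimpleGraph

variable {V : Type} {G : SimpleGraph V}

theorem Adj.dist_le_dist_add_one {v w : V} (h : G.Adj v w) (u : V) :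
    G.dist u w ≤ G.dist u v + 1 := by
  simpa [dist_eq_one_iff_adj.2 h] using h.reachable.dist_triangle_right u

theorem Reachable.exists_adj_dist_lt {r u : V} (h : G.Reachable r u) (hne : r ≠ u) :
    ∃ w, G.Adj w u ∧ G.dist r w < G.dist r u := by
  obtain ⟨p, -, hp⟩ := h.symm.exists_path_of_dist
  have hnil : ¬ p.Nil := fun hn => hne hn.eq.symm
  refine ⟨p.snd, (p.adj_snd hnil).symm, ?_⟩
  calc G.dist r p.snd = G.dist p.snd r := dist_comm
    _ ≤ p.tail.length := dist_le _
    _ < G.dist r u := by rw [dist_comm, ← hp, ← p.length_tail_add_one hnil]; omega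

theorem IsAcyclic.eq_of_adj_of_dist_lt (hG : G.IsAcyclic) {r a b c : V} (hr : G.Reachable r c)
    (hac : G.Adj a c) (hbc : G.Adj b c) (ha : G.dist r a < G.dist r c)
    (hb : G.dist r b < G.dist r c) : a = b := by
  have concat_isPath : ∀ {x}, (hxc : G.Adj x c) → G.dist r x < G.dist r c →
      ∃ p : G.Walk r x, (p.concat hxc).IsPath := by
    intro x hxc hx
    obtain ⟨p, -, hp⟩ := (hr.trans hxc.symm.reachable).exists_path_of_dist
    refine ⟨p, (p.concat hxc).isPath_of_length_eq_dist ?_⟩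
    have := hxc.dist_le_dist_add_one r
    rw [Walk.length_concat, hp]
    omega
  obtain ⟨p, hp⟩ := concat_isPath hac ha
  obtain ⟨q, hq⟩ := concat_isPath hbc hb
  have hpq := (hG.subsingleton_path r c).elim ⟨_, hp⟩ ⟨_, hq⟩
  exact (Walk.concat_inj (congrArg Subtype.val hpq)).1

theorem IsTree.eq_of_adj_of_dist_lt_of_dist_lt (hT : G.IsTree) {r s u v : V} (hrs : G.Adj r s)
    (huv : G.Adj u v) (hr : G.dist r u < G.dist r v) (hs : G.dist s v < G.dist s u) : u = r := by
  have hsu : G.dist s u ≤ G.dist r u + 1 := by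
    simpa only [dist_comm] using hrs.dist_le_dist_add_one u
  by_cases hvs : v = s
  · subst hvs
    exact hT.isAcyclic.eq_of_adj_of_dist_lt (hT.connected r v) huv hrs hr (by rw [dist_self]; omega)
  · obtain ⟨w, hwv, hw⟩ := (hT.connected s v).exists_adj_dist_lt (Ne.symm hvs)
    have hrw : G.dist r w ≤ G.dist s w + 1 := by
      simpa only [dist_comm] using hrs.symm.dist_le_dist_add_one w
    have huw := hT.isAcyclic.eq_of_adj_of_dist_lt (hT.connected r v) huv hwv hr (by omega)
    subst huw
    omega

end SimpleGraph

open SimpleGraph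

variable {V : Type} {G : SimpleGraph V}

theorem IsOrientationB.eq_of_imp {D₁ D₂ : V → V → Bool} (h₁ : IsOrientationB G D₁)
    (h₂ : IsOrientationB G D₂) (h : ∀ u v, D₁ u v = true → D₂ u v = true) :
    D₁ = D₂ := by
  funext u v
  refine Bool.eq_iff_iff.2 ⟨h u v, fun h₂uv => ?_⟩
  have huv := h₂.1 u v h₂uv
  by_contra h₁uv
  have h₂vu := h v u ((h₁.2 v u huv.symm).2 (by simpa using h₁uv))
  rw [(h₂.2 u v huv).1 h₂uv] at h₂vu
  exact Bool.false_ne_true h₂vu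

theorem IsOrientationB.exists_source [Finite V] {D : V → V → Bool} (hD : IsOrientationB G D)
    (hG : Nat.card G.edgeSet < Nat.card V) : ∃ r, ∀ u, D u r = false := by
  by_contra! h
  choose g hg using h
  simp only [ne_eq, Bool.not_eq_false] at hg
  let f : V → G.edgeSet := fun v => ⟨s(g v, v), hD.1 _ _ (hg v)⟩
  have hf : Function.Injective f := by
    intro a b hab
    rcases Sym2.eq_iff.1 (congrArg Subtype.val hab) with ⟨-, h⟩ | ⟨hga, hgb⟩
    · exact h
    · have hab := hg a
      have hba := hg b
      rw [hga] at hab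
      rw [← hgb, (hD.2 _ _ (hD.1 _ _ hab)).1 hab] at hba
      exact absurd hba Bool.false_ne_true
  exact absurd (Nat.card_le_card_of_injective f hf) (not_le.2 hG)

open Classical in
noncomputable def orientAwayFrom (G : SimpleGraph V) (r : V) : V → V → Bool :=
  fun u v => decide (G.Adj u v ∧ G.dist r u < G.dist r v)

@[simp]
theorem orientAwayFrom_eq_true {r u v : V} :
    orientAwayFrom G r u v = true ↔ G.Adj u v ∧ G.dist r u < G.dist r v := by
  simp [orientAwayFrom]

theorem orientAwayFrom_apply_self (G : SimpleGraph V) (r u : V) :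
    orientAwayFrom G r u r = false := by
  simp [orientAwayFrom]

theorem isOrientationB_orientAwayFrom (hT : G.IsTree) (r : V) :
    IsOrientationB G (orientAwayFrom G r) := by
  refine ⟨fun u v h => (orientAwayFrom_eq_true.1 h).1, fun u v huv => ?_⟩
  have := hT.dist_ne_of_adj r huv
  rw [← Bool.not_eq_true, orientAwayFrom_eq_true, orientAwayFrom_eq_true]
  simp only [huv, huv.symm, true_and, not_lt]
  omega

theorem noVStructureB_orientAwayFrom (hT : G.IsTree) (r : V) :
    NoVStructureB G (orientAwayFrom G r) := by
  rintro ⟨a, b, c, hab, -, ha, hb⟩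
  rw [orientAwayFrom_eq_true] at ha hb
  exact hab (hT.isAcyclic.eq_of_adj_of_dist_lt (hT.connected r c) ha.1 hb.1 ha.2 hb.2)

theorem orientAwayFrom_injective (hG : G.Connected) : Function.Injective (orientAwayFrom G) := by
  intro r s h
  by_contra hrs
  obtain ⟨w, hws, hw⟩ := (hG r s).exists_adj_dist_lt hrs
  have hrws : orientAwayFrom G r w s = true := orientAwayFrom_eq_true.2 ⟨hws, hw⟩
  rw [h, orientAwayFrom_apply_self] at hrws
  exact Bool.false_ne_true hrws

theorem apply_eq_true_of_source (hT : G.IsTree) {D : V → V → Bool} (hD : IsOrientationB G D)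
    (hv : NoVStructureB G D) {r : V} (hr : ∀ u, D u r = false) {u v : V} (huv : G.Adj u v)
    (hlt : G.dist r u < G.dist r v) : D u v = true := by
  induction hn : G.dist r v using Nat.strong_induction_on generalizing u v with
  | _ n ih =>
    by_contra hDuv
    have hDvu : D v u = true := (hD.2 v u huv.symm).2 (by simpa using hDuv)
    obtain rfl | hru := eq_or_ne r u
    · exact Bool.false_ne_true (hr v ▸ hDvu)
    obtain ⟨w, hwu, hw⟩ := (hT.connected r u).exists_adj_dist_lt hru
    have hDwu : D w u = true := ih _ (hn ▸ hlt) hwu hw rfl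
    have hwv : ¬ G.Adj w v := fun hwv => by
      have := hwv.dist_le_dist_add_one r
      omega
    exact hv ⟨w, v, u, fun h => by subst h; omega, hwv, hDwu, hDvu⟩

theorem orientAwayFrom_eq_of_source (hT : G.IsTree) {D : V → V → Bool}
    (hD : IsOrientationB G D) (hv : NoVStructureB G D) {r : V} (hr : ∀ u, D u r = false) :
    orientAwayFrom G r = D :=
  (isOrientationB_orientAwayFrom hT r).eq_of_imp hD fun _ _ h =>
    apply_eq_true_of_source hT hD hv hr (orientAwayFrom_eq_true.1 h).1
      (orientAwayFrom_eq_true.1 h).2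

theorem shd_self (D : V → V → Bool) : shd D D = 0 := by
  simp [shd]

theorem shd_orientAwayFrom_of_adj (hT : G.IsTree) {r s : V} (hrs : G.Adj r s) :
    shd (orientAwayFrom G r) (orientAwayFrom G s) = 1 := by
  rw [shd, Set.ncard_eq_one]
  refine ⟨(r, s), Set.ext fun ⟨u, v⟩ => ?_⟩
  simp only [Set.mem_ofPred_eq, Set.mem_singleton_iff, Prod.mk.injEq, orientAwayFrom_eq_true]
  constructor
  · rintro ⟨⟨huv, hr⟩, hs⟩
    have hs' : G.dist s v < G.dist s u := by
      rw [← Bool.not_eq_true, orientAwayFrom_eq_true] at hs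
      have := hT.dist_ne_of_adj s huv
      by_contra
      exact hs ⟨huv, by omega⟩
    exact ⟨hT.eq_of_adj_of_dist_lt_of_dist_lt hrs huv hr hs',
      hT.eq_of_adj_of_dist_lt_of_dist_lt hrs.symm huv.symm hs' hr⟩
  · rintro ⟨rfl, rfl⟩
    simp [hrs, orientAwayFrom_apply_self, dist_eq_one_iff_adj.2 hrs]

theorem two_le_shd_orientAwayFrom [Finite V] (hG : G.Connected) {r s : V} (hne : r ≠ s)
    (hrs : ¬ G.Adj r s) : 2 ≤ shd (orientAwayFrom G r) (orientAwayFrom G s) := by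
  obtain ⟨w, hws, hw⟩ := (hG r s).exists_adj_dist_lt hne
  obtain ⟨w', hw'r, hw'⟩ := (hG s r).exists_adj_dist_lt hne.symm
  refine (Set.one_lt_ncard_iff (Set.toFinite _)).2 ⟨(w, s), (r, w'), ?_, ?_, ?_⟩
  · exact ⟨orientAwayFrom_eq_true.2 ⟨hws, hw⟩, orientAwayFrom_apply_self G s w⟩
  · show orientAwayFrom G r r w' = true ∧ orientAwayFrom G s r w' = false
    rw [← Bool.not_eq_true, orientAwayFrom_eq_true, orientAwayFrom_eq_true,
      dist_eq_one_iff_adj.2 hw'r.symm, dist_self]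
    exact ⟨⟨hw'r.symm, zero_lt_one⟩, fun h => absurd h.2 (by omega)⟩
  · rintro ⟨rfl, -⟩
    exact hrs hws

theorem shd_orientAwayFrom_eq_one_iff [Finite V] (hT : G.IsTree) {r s : V} :
    shd (orientAwayFrom G r) (orientAwayFrom G s) = 1 ↔ G.Adj r s := by
  refine ⟨fun h => ?_, shd_orientAwayFrom_of_adj hT⟩
  by_contra hrs
  obtain rfl | hne := eq_or_ne r s
  · exact zero_ne_one ((shd_self _).symm.trans h)
  · have := two_le_shd_orientAwayFrom hT.connected hne hrs
    omega

noncomputable def orientAwayFromEquiv [Finite V] (hT : G.IsTree) :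
    V ≃ {D : V → V → Bool // IsOrientationB G D ∧ NoVStructureB G D} :=
  Equiv.ofBijective
    (fun r => ⟨orientAwayFrom G r, isOrientationB_orientAwayFrom hT r,
      noVStructureB_orientAwayFrom hT r⟩)
    ⟨fun _ _ h => orientAwayFrom_injective hT.connected (congrArg Subtype.val h), by
      rintro ⟨D, hD, hv⟩
      have hcard := (isTree_iff_connected_and_card.1 hT).2
      obtain ⟨r, hr⟩ := hD.exists_source (by omega)
      exact ⟨r, Subtype.ext (orientAwayFrom_eq_of_source hT hD hv hr)⟩⟩

theorem stmt12_general {V : Type} [Fintype V] (T : SimpleGraph V)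
    (hT : T.IsTree) :
    Nat.card {D' : V → V → Bool // IsOrientationB T D' ∧ NoVStructureB T D'} =
      Fintype.card V ∧
    ∃ f : {D' : V → V → Bool // IsOrientationB T D' ∧ NoVStructureB T D'} ≃ V,
      ∀ D₁ D₂ : {D' : V → V → Bool // IsOrientationB T D' ∧ NoVStructureB T D'},
        shd D₁.1 D₂.1 = 1 ↔ T.Adj (f D₁) (f D₂) := by
  let e := orientAwayFromEquiv hT
  refine ⟨by rw [← Nat.card_congr e, Nat.card_eq_fintype_card], e.symm, fun D₁ D₂ => ?_⟩
  obtain ⟨r, rfl⟩ := e.surjective D₁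
  obtain ⟨s, rfl⟩ := e.surjective D₂
  rw [e.symm_apply_apply, e.symm_apply_apply]
  exact shd_orientAwayFrom_eq_one_iff hT

/-- For a tree `T` on `n` vertices, the Markov equivalence class of any
v-structure-free orientation of `T` (i.e. the set of all v-structure-free
orientations of `T`) has exactly `n` members, and the graph on these members
with edges between orientations at structural Hamming distance 1 is isomorphic
to `T` itself. -/
theorem stmt12 {V : Type} [Fintype V] [DecidableEq V] (T : SimpleGraph V)
    (hT : T.IsTree) (D : V → V → Bool)
    (hD : IsOrientationB T D) (hv : NoVStructureB T D) :
    Nat.card {D' : V → V → Bool // IsOrientationB T D' ∧ NoVStructureB T D'} =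
      Fintype.card V ∧
    ∃ f : {D' : V → V → Bool // IsOrientationB T D' ∧ NoVStructureB T D'} ≃ V,
      ∀ D₁ D₂ : {D' : V → V → Bool // IsOrientationB T D' ∧ NoVStructureB T D'},
        shd D₁.1 D₂.1 = 1 ↔ T.Adj (f D₁) (f D₂) :=
  stmt12_general T hT
end

section
/- In an MCS on a connected graph G with a nonempty visited prefix τ, suppose x, y are unvisited vertices of maximum label lying in different connected components of the induced subgraph on maximum-label vertices, and suppose some vertex z is a visited common neighbor of both x and y while x and y are nonadjacent. If x and y are joined by an induced path x - p_1 - ... - p_ℓ - y among unvisited vertices where some p_i is nonadjacent to z, then G contains a chordless cycle of length at least 4; hence G is not chordal. -/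
/-!
Let `p` be an induced path from `x` to `y` and `z` a vertex off `p` adjacent to both ends.
In a chordal graph `z` is adjacent to every vertex of `p`: if `p` has an interior vertex, the cycle
`z - x - p - y - z` has length at least 4, so it has a chord; as `p` is induced, the chord joins `z`
to an interior vertex `w` of `p`, and induction applies to the two shorter induced paths into
which `w` splits `p`. A vertex of `p` nonadjacent to `z` therefore rules out chordality.
-/

namespace SimpleGraph.Walk

variable {V : Type} {G : SimpleGraph V} {u v w x y z : V}

theorem two_le_length_of_mem_support {p : G.Walk u w} (hv : v ∈ p.support) (hvu : v ≠ u)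
    (hvw : v ≠ w) : 2 ≤ p.length := by
  cases p with
  | nil => simp_all
  | cons _ q =>
    cases q with
    | nil => simp_all
    | cons => simp

theorem IsPath.eq_of_mem_support_of_mem_support_append {p : G.Walk u v} {q : G.Walk v w}
    (hpq : (p.append q).IsPath) (hp : x ∈ p.support) (hq : x ∈ q.support) : x = v :=
  by_contra fun hxv => hpq.ne_of_mem_support_of_append hxv hp hq rfl

theorem IsChordless.of_append_left {p : G.Walk u v} {q : G.Walk v w}
    (hpq : (p.append q).IsPath) (h : (p.append q).IsChordless) : p.IsChordless := by
  refine isChordless_iff_forall_mem_edges.mpr fun a b ha hb hab => ?_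
  have hmem := h.mem_edges (p.support_subset_support_append_left q ha)
    (p.support_subset_support_append_left q hb) hab
  rw [edges_append, List.mem_append] at hmem
  refine hmem.resolve_right fun hq => hab.ne ?_
  rw [hpq.eq_of_mem_support_of_mem_support_append ha (q.fst_mem_support_of_mem_edges hq),
    hpq.eq_of_mem_support_of_mem_support_append hb (q.snd_mem_support_of_mem_edges hq)]

theorem IsChordless.of_append_right {p : G.Walk u v} {q : G.Walk v w}
    (hpq : (p.append q).IsPath) (h : (p.append q).IsChordless) : q.IsChordless := by
  refine isChordless_iff_forall_mem_edges.mpr fun a b ha hb hab => ?_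
  have hmem := h.mem_edges (p.support_subset_support_append_right q ha)
    (p.support_subset_support_append_right q hb) hab
  rw [edges_append, List.mem_append] at hmem
  refine hmem.resolve_left fun hp => hab.ne ?_
  rw [hpq.eq_of_mem_support_of_mem_support_append (p.fst_mem_support_of_mem_edges hp) ha,
    hpq.eq_of_mem_support_of_mem_support_append (p.snd_mem_support_of_mem_edges hp) hb]

theorem IsPath.isCycle_cons_concat {p : G.Walk x y} (hp : p.IsPath) (hz : z ∉ p.support)
    (hxy : x ≠ y) (hzx : G.Adj z x) (hyz : G.Adj y z) : (cons hzx (p.concat hyz)).IsCycle := by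
  refine (cons_isCycle_iff _ _).mpr ⟨hp.concat hz hyz, ?_⟩
  rw [edges_concat, List.concat_eq_append, List.mem_append]
  rintro (h | h)
  · exact hz (p.fst_mem_support_of_mem_edges h)
  · simp [hxy, hzx.ne.symm] at h

theorem IsChordless.cons_concat {p : G.Walk x y} (hp : p.IsChordless) (hzx : G.Adj z x)
    (hyz : G.Adj y z) (hz : ∀ w ∈ p.support, G.Adj z w → w = x ∨ w = y) :
    (cons hzx (p.concat hyz)).IsChordless := by
  have hsupp : ∀ a ∈ (cons hzx (p.concat hyz)).support, a = z ∨ a ∈ p.support := by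
    simp [support_concat, or_comm]
  have hchord : ∀ a ∈ p.support, G.Adj z a → s(z, a) ∈ (cons hzx (p.concat hyz)).edges := by
    intro a ha hza
    rcases hz a ha hza with rfl | rfl <;> simp [edges_concat, Sym2.eq_swap]
  refine isChordless_iff_forall_mem_edges.mpr fun a b ha hb hab => ?_
  rcases hsupp a ha with rfl | hap <;> rcases hsupp b hb with rfl | hbp
  · exact absurd rfl hab.ne
  · exact hchord b hbp hab
  · exact Sym2.eq_swap ▸ hchord a hap hab.symm
  · simp [edges_concat, hp.mem_edges hap hbp hab]

end SimpleGraph.Walk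

open SimpleGraph Walk

theorem IsChordal.not_isChordless {V : Type} {G : SimpleGraph V} (hG : IsChordal G) {v : V}
    {c : G.Walk v v} (hc : c.IsCycle) (hlen : 4 ≤ c.length) : ¬ c.IsChordless := fun h =>
  let ⟨_, _, hu, hw, hadj, hnot⟩ := hG c hc hlen
  hnot (h.mem_edges hu hw hadj)

theorem IsChordal.adj_of_mem_support {V : Type} {G : SimpleGraph V} (hG : IsChordal G)
    {x y z : V} (p : G.Walk x y) (hp : p.IsPath) (hc : p.IsChordless) (hz : z ∉ p.support)
    (hzx : G.Adj z x) (hzy : G.Adj z y) {v : V} (hv : v ∈ p.support) : G.Adj z v := by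
  classical
  by_cases hend : v = x ∨ v = y
  · rcases hend with rfl | rfl <;> assumption
  obtain ⟨hvx, hvy⟩ := not_or.mp hend
  have hlen := two_le_length_of_mem_support hv hvx hvy
  have hxy : x ≠ y := by
    rintro rfl
    simp [(isPath_iff_nil.mp hp).length_eq_zero] at hlen
  obtain ⟨w, hw, hzw, hwx, hwy⟩ : ∃ w ∈ p.support, G.Adj z w ∧ w ≠ x ∧ w ≠ y := by
    by_contra! hnone
    refine hG.not_isChordless (hp.isCycle_cons_concat hz hxy hzx hzy.symm) ?_
      (hc.cons_concat hzx hzy.symm fun w hw hzw => or_iff_not_imp_left.mpr (hnone w hw hzw))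
    simp only [length_cons, length_concat]
    omega
  have hpath : ((p.takeUntil w hw).append (p.dropUntil w hw)).IsPath :=
    (p.take_spec hw).symm ▸ hp
  have hchordless : ((p.takeUntil w hw).append (p.dropUntil w hw)).IsChordless :=
    (p.take_spec hw).symm ▸ hc
  rw [← p.take_spec hw, mem_support_append_iff] at hv
  rcases hv with hv | hv
  · exact hG.adj_of_mem_support (p.takeUntil w hw) (hp.takeUntil hw)
      (hchordless.of_append_left hpath) (fun h => hz (p.support_takeUntil_subset_support hw h))
      hzx hzw hv
  · exact hG.adj_of_mem_support (p.dropUntil w hw) (hp.dropUntil hw)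
      (hchordless.of_append_right hpath) (fun h => hz (p.support_dropUntil_subset_support hw h))
      hzw hzy hv
termination_by p.length
decreasing_by
  · classical exact length_takeUntil_lt_length hw hwy
  · classical exact length_dropUntil_lt_length hw hwx

theorem stmt14_general {V : Type} (G : SimpleGraph V) (τ : List V) (x y : V)
    (z : V) (hz : z ∈ τ) (hzx : G.Adj z x) (hzy : G.Adj z y)
    (p : G.Walk x y) (hp : p.IsPath)
    (hind : ∀ u w : V, u ∈ p.support → w ∈ p.support → G.Adj u w →
      s(u, w) ∈ p.edges)
    (hunvis : ∀ v ∈ p.support, v ∉ τ)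
    (hpi : ∃ v ∈ p.support, v ≠ x ∧ v ≠ y ∧ ¬ G.Adj v z) :
    ¬ IsChordal G := fun hG =>
  let ⟨_, hv, _, _, hvz⟩ := hpi
  hvz (hG.adj_of_mem_support p hp (isChordless_iff_forall_mem_edges.mpr fun _ _ => hind _ _)
    (fun hzp => hunvis z hzp hz) hzx hzy hv).symm

/-- In an MCS on a connected graph with nonempty visited prefix `τ`: if the
maximum-label vertices `x, y` lie in different components of the induced
subgraph on the maximum-label set, have a visited common neighbor `z`, are
nonadjacent, and are joined by an induced path through unvisited vertices some
interior vertex of which is nonadjacent to `z`, then `G` is not chordal. -/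
theorem stmt14 {V : Type} [Fintype V] [DecidableEq V] (G : SimpleGraph V)
    [DecidableRel G.Adj] (hconn : G.Connected)
    (τ : List V) (hτ : IsMCSPrefix G τ) (hτne : τ ≠ [])
    (x y : V) (hx : x ∉ τ) (hy : y ∉ τ)
    (hxmax : ∀ u : V, u ∉ τ → mcsLabel G τ u ≤ mcsLabel G τ x)
    (hymax : ∀ u : V, u ∉ τ → mcsLabel G τ u ≤ mcsLabel G τ y)
    (hdisc : ¬ (G.induce
        {w : V | w ∉ τ ∧ ∀ u : V, u ∉ τ → mcsLabel G τ u ≤ mcsLabel G τ w}).Reachable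
        ⟨x, ⟨hx, hxmax⟩⟩ ⟨y, ⟨hy, hymax⟩⟩)
    (z : V) (hz : z ∈ τ) (hzx : G.Adj z x) (hzy : G.Adj z y)
    (hnxy : ¬ G.Adj x y)
    (p : G.Walk x y) (hp : p.IsPath)
    (hind : ∀ u w : V, u ∈ p.support → w ∈ p.support → G.Adj u w →
      s(u, w) ∈ p.edges)
    (hunvis : ∀ v ∈ p.support, v ∉ τ)
    (hpi : ∃ v ∈ p.support, v ≠ x ∧ v ≠ y ∧ ¬ G.Adj v z) :
    ¬ IsChordal G :=
  stmt14_general G τ x y z hz hzx hzy p hp hind hunvis hpi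
end

section
/- A finite undirected graph admits an acyclic orientation with no v-structures (an AMO) if and only if it is chordal. -/
/-!
An AMO forces chords: on a cycle of length at least 4, acyclicity gives a vertex `m` with no
arc to another vertex of the cycle, so both cycle-neighbours of `m` point into it; having no
v-structure, they are adjacent, and as the cycle is not a triangle that edge is a chord.

Conversely, every induced subgraph `G[W]` of a chordal graph has a simplicial vertex outside any
given clique `K` (Dirac). If `G[W]` is not complete, pick nonadjacent `a, b`, let `B` be the
component of `b` in `G[W] - N[a]` and `S` the neighbours of `a` with a neighbour in `B`. Then `S`
is a clique: for nonadjacent `x, y ∈ S`, a shortest `x`-`y` path through `B` closed up by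
`y - a - x` is a chordless cycle of length at least 4. One of `B` and `W \ (B ∪ S)` misses `K`,
and induction on that side together with `S` gives the vertex. Removing simplicial vertices one
at a time numbers the vertices so that the earlier neighbours of every vertex form a clique, and
orienting each edge from its earlier to its later end is an AMO.
-/

open SimpleGraph Walk Function

namespace SimpleGraph.Walk

variable {V : Type*} {G : SimpleGraph V} {u v : V}

lemma exists_length_lt_of_not_isChordless {p : G.Walk u v} (hp : ¬ p.IsChordless) :
    ∃ q : G.Walk u v, q.length < p.length ∧ q.support ⊆ p.support := by
  simp only [isChordless_iff_forall_mem_edges, not_forall] at hp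
  obtain ⟨x, y, hx, hy, hxy, hxy_notMem⟩ := hp
  obtain ⟨i, rfl, hi⟩ := mem_support_iff_exists_getVert.mp hx
  obtain ⟨j, rfl, hj⟩ := mem_support_iff_exists_getVert.mp hy
  clear hx hy
  wlog hij : i < j generalizing i j
  · rcases (not_lt.mp hij).lt_or_eq with h | rfl
    · exact this j hj i hi hxy.symm (by rwa [Sym2.eq_swap]) h
    · exact absurd hxy G.irrefl
  have hij' : i + 1 ≠ j := by
    rintro rfl
    exact hxy_notMem ((mk_mem_edges_iff_exists p).mpr ⟨i, by omega, rfl⟩)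
  refine ⟨(p.take i).append (cons hxy (p.drop j)), ?_, ?_⟩
  · simp only [length_append, take_length, length_cons, drop_length]
    omega
  · rw [support_append, support_cons, support_take, List.tail_cons,
      drop_support_eq_support_drop_min]
    exact List.append_subset.mpr ⟨(List.take_sublist _ _).subset, (List.drop_sublist _ _).subset⟩

lemma exists_isPath_isChordless (p : G.Walk u v) :
    ∃ q : G.Walk u v, q.IsPath ∧ q.IsChordless ∧ q.support ⊆ p.support := by
  classical
  induction h : p.length using Nat.strong_induction_on generalizing p with
  | _ n ih =>
  by_cases hp : p.bypass.IsChordless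
  · exact ⟨p.bypass, bypass_isPath p, hp, support_bypass_subset_support p⟩
  · obtain ⟨q, hlt, hsub⟩ := exists_length_lt_of_not_isChordless hp
    obtain ⟨r, hr, hrc, hrq⟩ := ih q.length (h ▸ hlt.trans_le p.length_bypass_le_length) q rfl
    exact ⟨r, hr, hrc,
      List.Subset.trans hrq (List.Subset.trans hsub (support_bypass_subset_support p))⟩

lemma IsCycle.mk_snd_penultimate_notMem_edges {c : G.Walk u u} (hc : c.IsCycle)
    (h4 : 4 ≤ c.length) : s(c.snd, c.penultimate) ∉ c.edges := by
  have hedges : c.edges = s(u, c.snd) :: c.tail.edges := by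
    rw [← edges_cons (c.adj_snd hc.not_nil), cons_tail_eq _ hc.not_nil]
  rw [hedges, List.mem_cons]
  rintro (h | h)
  · have hsnd : c.snd ≠ u := (hc.getVert_endpoint_iff (by omega)).not.mpr (by omega)
    have hpen : c.penultimate ≠ u := (hc.getVert_endpoint_iff (by omega)).not.mpr (by omega)
    rcases Sym2.eq_iff.mp h with ⟨h, -⟩ | ⟨-, h⟩
    exacts [hsnd h, hpen h]
  · have h2 : c.getVert (c.length - 1) = c.getVert (1 + 1) := by
      rw [← getVert_tail]
      exact hc.isPath_tail.eq_snd_of_mem_edges h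
    have := hc.getVert_injOn (by simp; omega) (by simp; omega) h2
    omega

end SimpleGraph.Walk

lemma Relation.exists_sink_of_acyclic {α : Type*} [Finite α] {r : α → α → Prop}
    (hr : ∀ a, ¬ Relation.TransGen r a a) {s : Set α} (hs : s.Nonempty) :
    ∃ m ∈ s, ∀ a ∈ s, ¬ r m a := by
  have : IsTrans α (swap (Relation.TransGen r)) := ⟨fun _ _ _ h₁ h₂ => h₂.trans h₁⟩
  have : Std.Irrefl (swap (Relation.TransGen r)) := ⟨hr⟩
  obtain ⟨m, hm, hmin⟩ :=
    (Finite.wellFounded_of_trans_of_irrefl (swap (Relation.TransGen r))).has_min s hs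
  exact ⟨m, hm, fun a ha h => hmin a ha (.single h)⟩

section

variable {V : Type} {G : SimpleGraph V}

lemma IsAMO.isChordal [Finite V] {D : V → V → Prop} (hD : IsAMO G D) : IsChordal G := by
  classical
  obtain ⟨⟨-, horient⟩, hacyc, hnoV⟩ := hD
  intro v c hc h4
  obtain ⟨m, hm, hsink⟩ :=
    Relation.exists_sink_of_acyclic hacyc (s := {x | x ∈ c.support}) ⟨v, c.start_mem_support⟩
  have hc' := hc.rotate hm
  have hmem : ∀ x ∈ (c.rotate m hm).support, x ∈ c.support :=
    fun x => (mem_support_rotate_iff c m hm).mp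
  have hinto : ∀ x ∈ c.support, G.Adj m x → D x m :=
    fun x hx hmx => not_not.mp ((horient m x hmx).not.mp (hsink x hx))
  set x := (c.rotate m hm).snd
  set y := (c.rotate m hm).penultimate
  have hx : x ∈ c.support := hmem x (getVert_mem_support _ _)
  have hy : y ∈ c.support := hmem y (getVert_mem_support _ _)
  by_cases hxy : G.Adj x y
  · refine ⟨x, y, hx, hy, hxy, fun h => hc'.mk_snd_penultimate_notMem_edges (by simpa) ?_⟩
    exact (rotate_edges c m hm).perm.mem_iff.mpr h
  · exact absurd ⟨x, y, m, hc'.snd_ne_penultimate, hxy,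
      hinto x hx (adj_snd hc'.not_nil), hinto y hy (adj_penultimate hc'.not_nil).symm⟩ hnoV

lemma IsChordal.adj_of_isChordless_path (hG : IsChordal G) {a x y : V} {p : G.Walk x y}
    (hp : p.IsPath) (hpc : p.IsChordless) (hxy : x ≠ y) (hax : G.Adj a x) (hay : G.Adj a y)
    (ha : a ∉ p.support) (hnbr : ∀ z ∈ p.support, G.Adj a z → z = x ∨ z = y) : G.Adj x y := by
  by_contra hnxy
  have hlen : 2 ≤ p.length := by
    have h0 : p.length ≠ 0 := fun h => hxy (eq_of_length_eq_zero h)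
    have h1 : p.length ≠ 1 := fun h => hnxy (adj_of_length_eq_one h)
    omega
  have hc : (cons hax (p.concat hay.symm)).IsCycle := by
    refine (cons_isCycle_iff _ _).mpr ⟨hp.concat ha _, ?_⟩
    rw [edges_concat, List.concat_eq_append, List.mem_append, List.mem_singleton, not_or]
    refine ⟨fun h => ha (p.fst_mem_support_of_mem_edges h), fun h => ?_⟩
    rcases Sym2.eq_iff.mp h with ⟨h, -⟩ | ⟨-, h⟩
    exacts [hay.ne h, hxy h]
  obtain ⟨u, w, hu, hw, huw, hnot⟩ := hG _ hc (by simp; omega)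
  simp only [support_cons, support_concat, List.mem_cons, List.mem_append, List.not_mem_nil,
    or_false, edges_cons, edges_concat, List.concat_eq_append, not_or] at hu hw hnot
  obtain ⟨hax_ne, hp_notMem, hay_ne⟩ := hnot
  replace hu : u = a ∨ u ∈ p.support := by tauto
  replace hw : w = a ∨ w ∈ p.support := by tauto
  rcases hu with rfl | hu <;> rcases hw with rfl | hw
  · exact G.irrefl huw
  · rcases hnbr w hw huw with rfl | rfl
    exacts [hax_ne rfl, hay_ne Sym2.eq_swap]
  · rcases hnbr u hu huw.symm with rfl | rfl
    exacts [hax_ne Sym2.eq_swap, hay_ne rfl]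
  · exact hp_notMem (hpc.mem_edges hu hw huw)

lemma IsChordal.exists_clique_separator (hG : IsChordal G) {W : Set V} {a b : V} (ha : a ∈ W)
    (hb : b ∈ W) (hab : a ≠ b) (hnab : ¬ G.Adj a b) :
    ∃ S B : Set V, S ⊆ W ∧ G.IsClique S ∧ b ∈ B ∧ B ⊆ W ∧ a ∉ B ∧ a ∉ S ∧ Disjoint B S ∧
      ∀ t ∈ B, G.neighborSet t ∩ W ⊆ B ∪ S := by
  set T := W \ insert a (G.neighborSet a)
  set B := {z | ∃ p : G.Walk b z, ∀ v ∈ p.support, v ∈ T}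
  set S := {s | s ∈ W ∧ G.Adj a s ∧ ∃ t ∈ B, G.Adj s t}
  have hBT : B ⊆ T := fun z ⟨p, hp⟩ => hp z p.end_mem_support
  have haT : a ∉ T := fun h => h.2 (Set.mem_insert a _)
  have hST : Disjoint T S := Set.disjoint_left.mpr fun z hz hzS => hz.2 (Or.inr hzS.2.1)
  refine ⟨S, B, fun s hs => hs.1, ?_, ⟨.nil, ?_⟩, fun z hz => (hBT hz).1,
    fun h => haT (hBT h), fun h => G.irrefl h.2.1, hST.mono_left hBT, ?_⟩
  · rintro x ⟨-, hax, tx, ⟨px, hpx⟩, hxtx⟩ y ⟨-, hay, ty, ⟨py, hpy⟩, hyty⟩ hxy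
    obtain ⟨p, hp, hpc, hpq⟩ :=
      (cons hxtx ((px.reverse.append py).concat hyty.symm)).exists_isPath_isChordless
    have hpT : ∀ z ∈ p.support, z = x ∨ z = y ∨ z ∈ T := by
      intro z hz
      have := hpq hz
      simp only [support_cons, support_concat, support_append, support_reverse, List.mem_cons,
        List.mem_append, List.mem_reverse, List.not_mem_nil, or_false] at this
      rcases this with h | (h | h) | h
      exacts [Or.inl h, Or.inr (Or.inr (hpx z h)),
        Or.inr (Or.inr (hpy z (List.mem_of_mem_tail h))), Or.inr (Or.inl h)]
    refine hG.adj_of_isChordless_path hp hpc hxy hax hay (fun h => ?_) fun z hz haz => ?_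
    · rcases hpT a h with h | h | h
      exacts [hax.ne h, hay.ne h, haT h]
    · rcases hpT z hz with h | h | h
      exacts [Or.inl h, Or.inr h, absurd (Or.inr haz) h.2]
  · intro v hv
    rw [support_nil, List.mem_singleton] at hv
    subst hv
    exact ⟨hb, by rintro (h | h); exacts [hab h.symm, hnab h]⟩
  · rintro t ⟨p, hp⟩ w ⟨htw : G.Adj t w, hw⟩
    by_cases haw : G.Adj a w
    · exact Or.inr ⟨hw, haw, t, ⟨p, hp⟩, htw.symm⟩
    · refine Or.inl ⟨p.concat htw, fun z hz => ?_⟩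
      rw [support_concat, List.mem_append, List.mem_singleton] at hz
      rcases hz with hz | rfl
      · exact hp z hz
      · refine ⟨hw, ?_⟩
        rintro (rfl | h)
        exacts [(hp t p.end_mem_support).2 (Or.inr htw.symm), haw h]

lemma IsChordal.exists_clique_separated_disjoint_of_not_isClique (hG : IsChordal G)
    {W K : Set V} (hW : ¬ G.IsClique W) (hK : G.IsClique K) :
    ∃ C S : Set V, C.Nonempty ∧ C ∪ S ⊂ W ∧ Disjoint C S ∧ Disjoint C K ∧ G.IsClique S ∧
      ∀ t ∈ C, G.neighborSet t ∩ W ⊆ C ∪ S := by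
  obtain ⟨a, ha, b, hb, hab, hnab⟩ : ∃ a ∈ W, ∃ b ∈ W, a ≠ b ∧ ¬ G.Adj a b := by
    simpa [IsClique, Set.Pairwise] using hW
  obtain ⟨S, B, hSW, hS, hbB, hBW, haB, haS, hBS, hBclosed⟩ :=
    hG.exists_clique_separator ha hb hab hnab
  have hbS : b ∉ S := Set.disjoint_left.mp hBS hbB
  by_cases hBK : Disjoint B K
  · refine ⟨B, S, ⟨b, hbB⟩, ?_, hBS, hBK, hS, hBclosed⟩
    exact Set.ssubset_iff_of_subset (Set.union_subset hBW hSW) |>.mpr ⟨a, ha, by simp [haB, haS]⟩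
  obtain ⟨k, hkB, hkK⟩ := Set.not_disjoint_iff.mp hBK
  refine ⟨W \ (B ∪ S), S, ⟨a, ha, by simp [haB, haS]⟩, ?_, ?_, ?_, hS, ?_⟩
  · exact Set.ssubset_iff_of_subset (Set.union_subset Set.sdiff_subset hSW) |>.mpr
      ⟨b, hb, by simp [hbB, hbS]⟩
  · exact Set.disjoint_left.mpr fun z hz hzS => hz.2 (Or.inr hzS)
  · refine Set.disjoint_left.mpr fun z hz hzK => hz.2 ?_
    have hkz : k ≠ z := by rintro rfl; exact hz.2 (Or.inl hkB)
    exact hBclosed k hkB ⟨hK hkK hzK hkz, hz.1⟩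
  · rintro z hz w ⟨hzw, hwW⟩
    by_cases hwB : w ∈ B
    · exact absurd (hBclosed w hwB ⟨hzw.symm, hz.1⟩) hz.2
    · by_cases hwS : w ∈ S
      exacts [Or.inr hwS, Or.inl ⟨hwW, by simp [hwB, hwS]⟩]

lemma IsChordal.exists_isClique_neighborSet_inter [Finite V] (hG : IsChordal G) (W K : Set V)
    (hK : G.IsClique K) (hWK : (W \ K).Nonempty) :
    ∃ v ∈ W \ K, G.IsClique (G.neighborSet v ∩ W) := by
  induction h : W.ncard using Nat.strong_induction_on generalizing W K with
  | _ n ih =>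
  by_cases hW : G.IsClique W
  · obtain ⟨v, hv⟩ := hWK
    exact ⟨v, hv, hW.subset Set.inter_subset_right⟩
  obtain ⟨C, S, ⟨c, hc⟩, hCSW, hCS, hCK, hS, hCclosed⟩ :=
    hG.exists_clique_separated_disjoint_of_not_isClique hW hK
  obtain ⟨v, ⟨hvCS, hvS⟩, hv⟩ := ih _ (h ▸ Set.ncard_lt_ncard hCSW) (C ∪ S) S hS
    ⟨c, Or.inl hc, Set.disjoint_left.mp hCS hc⟩ rfl
  have hvC : v ∈ C := hvCS.resolve_right hvS
  exact ⟨v, ⟨hCSW.subset (Or.inl hvC), Set.disjoint_left.mp hCK hvC⟩,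
    hv.subset fun w hw => Set.mem_inter hw.1 (hCclosed v hvC hw)⟩

lemma IsChordal.exists_injOn_isClique_lower [Finite V] (hG : IsChordal G) (W : Set V) :
    ∃ f : V → ℕ, Set.InjOn f W ∧ ∀ c ∈ W, G.IsClique {u | u ∈ W ∧ G.Adj u c ∧ f u < f c} := by
  classical
  induction h : W.ncard using Nat.strong_induction_on generalizing W with
  | _ n ih =>
  rcases W.eq_empty_or_nonempty with rfl | hW
  · exact ⟨0, by simp, by simp⟩
  obtain ⟨v, ⟨hvW, -⟩, hv⟩ :=
    hG.exists_isClique_neighborSet_inter W ∅ isClique_empty (by simpa using hW)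
  obtain ⟨f, hf, hlower⟩ := ih _ (h ▸ Set.ncard_sdiff_singleton_lt_of_mem hvW) (W \ {v}) rfl
  have : Nonempty V := ⟨v⟩
  obtain ⟨x₀, hx₀⟩ := Finite.exists_max f
  have hlt : ∀ x, f x < f x₀ + 1 := fun x => Nat.lt_succ_of_le (hx₀ x)
  refine ⟨update f v (f x₀ + 1), ?_, fun c hc => ?_⟩
  · intro x hx y hy hxy
    rcases eq_or_ne v x with rfl | hxv <;> rcases eq_or_ne v y with rfl | hyv
    · rfl
    · rw [update_self, update_of_ne hyv.symm] at hxy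
      exact absurd hxy (hlt y).ne'
    · rw [update_self, update_of_ne hxv.symm] at hxy
      exact absurd hxy (hlt x).ne
    · rw [update_of_ne hxv.symm, update_of_ne hyv.symm] at hxy
      exact hf ⟨hx, hxv.symm⟩ ⟨hy, hyv.symm⟩ hxy
  rcases eq_or_ne v c with rfl | hcv
  · exact hv.subset fun u hu => Set.mem_inter hu.2.1.symm hu.1
  refine (hlower c ⟨hc, hcv.symm⟩).subset fun u ⟨huW, huc, hfu⟩ => ?_
  have huv : u ≠ v := by
    rintro rfl
    rw [update_self, update_of_ne hcv.symm] at hfu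
    exact (hlt c).not_gt hfu
  rw [update_of_ne huv, update_of_ne hcv.symm] at hfu
  exact ⟨⟨huW, huv⟩, huc, hfu⟩

lemma isAMO_of_injective_of_isClique_lower {α : Type*} [LinearOrder α] {f : V → α}
    (hf : Injective f) (hlower : ∀ c, G.IsClique {u | G.Adj u c ∧ f u < f c}) :
    IsAMO G (fun u v => G.Adj u v ∧ f u < f v) := by
  have hlt : ∀ u v, Relation.TransGen (fun u v => G.Adj u v ∧ f u < f v) u v → f u < f v := by
    intro u v h
    induction h with
    | single h => exact h.2
    | tail _ h ih => exact ih.trans h.2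
  refine ⟨⟨fun u v h => h.1, fun u v huv => ⟨fun h h' => lt_asymm h.2 h'.2, fun h => ?_⟩⟩,
    fun v h => (hlt v v h).false, ?_⟩
  · exact ⟨huv, lt_of_le_of_ne (not_lt.mp fun h' => h ⟨huv.symm, h'⟩) (hf.ne huv.ne)⟩
  · rintro ⟨a, b, c, hab, hnab, hac, hbc⟩
    exact hnab (hlower c hac hbc hab)

end

/-- A finite undirected graph admits an acyclic orientation with no
v-structures (an AMO) if and only if it is chordal. -/
theorem stmt17 {V : Type} [Fintype V] (G : SimpleGraph V) :
    (∃ D : V → V → Prop, IsAMO G D) ↔ IsChordal G := by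
  refine ⟨fun ⟨_, hD⟩ => hD.isChordal, fun hG => ?_⟩
  obtain ⟨f, hf, hlower⟩ := hG.exists_injOn_isClique_lower Set.univ
  exact ⟨_, isAMO_of_injective_of_isClique_lower (Set.injOn_univ.mp hf) fun c => by
    simpa using hlower c (Set.mem_univ c)⟩
end

section
/- If the undirected part of a partially directed graph G decomposes into connected components C_1, ..., C_k, and for each i an AMO of C_i is chosen independently, then the number of consistent extensions obtained this way equals the product over i of the number of AMOs of C_i. -/
/-- An AMO of `G` (Boolean-valued): an acyclic orientation without
v-structures. -/
def IsAMOB {V : Type} (G : SimpleGraph V) (D : V → V → Bool) : Prop :=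
  IsOrientationB G D ∧
  (∀ v, ¬ Relation.TransGen (fun a b => D a b = true) v v) ∧
  ¬ ∃ a b c : V, a ≠ b ∧ ¬ G.Adj a b ∧ D a c = true ∧ D b c = true

namespace Stmt18Aux

variable {V : Type} (G : SimpleGraph V)

/-- Restrict an orientation to a connected component. -/
def restrict (D : V → V → Bool) (c : G.ConnectedComponent) :
    c.supp → c.supp → Bool := fun u v => D u.1 v.1

lemma restrict_isAMOB {D : V → V → Bool} (hD : IsAMOB G D) (c : G.ConnectedComponent) :
    IsAMOB (G.induce c.supp) (restrict G D c) := by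
  obtain ⟨⟨h1, h2⟩, hac, hvs⟩ := hD
  refine ⟨⟨fun u v h => h1 _ _ h, fun u v h => h2 _ _ h⟩, ?_, ?_⟩
  · intro v hv
    exact hac v.1 (hv.lift Subtype.val (fun a b h => h))
  · rintro ⟨a, b, x, hab, hnadj, hax, hbx⟩
    exact hvs ⟨a.1, b.1, x.1, fun h => hab (Subtype.ext h), hnadj, hax, hbx⟩

open Classical in
/-- Glue a family of component orientations into a global orientation. -/
noncomputable def glue (f : ∀ c : G.ConnectedComponent, c.supp → c.supp → Bool) : V → V → Bool :=
  fun u v =>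
    if h : G.connectedComponentMk v = G.connectedComponentMk u then
      f (G.connectedComponentMk u) ⟨u, rfl⟩ ⟨v, h⟩
    else false

lemma f_congr (f : ∀ c : G.ConnectedComponent, c.supp → c.supp → Bool)
    {c c' : G.ConnectedComponent} (h : c = c') {u v : V}
    (hu : u ∈ c.supp) (hv : v ∈ c.supp) (hu' : u ∈ c'.supp) (hv' : v ∈ c'.supp) :
    f c ⟨u, hu⟩ ⟨v, hv⟩ = f c' ⟨u, hu'⟩ ⟨v, hv'⟩ := by subst h; rfl

lemma glue_true {f : ∀ c : G.ConnectedComponent, c.supp → c.supp → Bool} {u v : V}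
    (h : glue G f u v = true) :
    ∃ hc : G.connectedComponentMk v = G.connectedComponentMk u,
      f (G.connectedComponentMk u) ⟨u, rfl⟩ ⟨v, hc⟩ = true := by
  unfold glue at h
  split at h
  · exact ⟨‹_›, h⟩
  · simp at h

lemma glue_eq {f : ∀ c : G.ConnectedComponent, c.supp → c.supp → Bool} {u v : V}
    (hc : G.connectedComponentMk v = G.connectedComponentMk u) :
    glue G f u v = f (G.connectedComponentMk u) ⟨u, rfl⟩ ⟨v, hc⟩ := by
  unfold glue; rw [dif_pos hc]

lemma glue_isAMOB (f : ∀ c : G.ConnectedComponent, c.supp → c.supp → Bool)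
    (hf : ∀ c, IsAMOB (G.induce c.supp) (f c)) :
    IsAMOB G (glue G f) := by
  refine ⟨⟨?_, ?_⟩, ?_, ?_⟩
  · intro u v h
    obtain ⟨hc, h⟩ := glue_true G h
    exact (hf (G.connectedComponentMk u)).1.1 _ _ h
  · intro u v hadj
    have hc : G.connectedComponentMk v = G.connectedComponentMk u :=
      SimpleGraph.ConnectedComponent.sound hadj.symm.reachable
    rw [glue_eq G hc, glue_eq G hc.symm,
      f_congr G f hc (u := v) (v := u) rfl hc.symm hc rfl]
    exact (hf (G.connectedComponentMk u)).1.2 ⟨u, rfl⟩ ⟨v, hc⟩ hadj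
  · intro v hv
    have key : ∀ w, Relation.TransGen (fun a b => glue G f a b = true) v w →
        ∃ hw : G.connectedComponentMk w = G.connectedComponentMk v,
          Relation.TransGen
            (fun a b : (G.connectedComponentMk v).supp =>
              f (G.connectedComponentMk v) a b = true) ⟨v, rfl⟩ ⟨w, hw⟩ := by
      intro w hw
      induction hw with
      | single h =>
        obtain ⟨hc, h⟩ := glue_true G h
        exact ⟨hc, Relation.TransGen.single h⟩
      | tail _ h ih =>
        obtain ⟨hc1, ih⟩ := ih
        obtain ⟨hc2, h⟩ := glue_true G h
        refine ⟨hc2.trans hc1, ih.tail ?_⟩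
        rw [f_congr G f hc1 (hu := rfl) (hv := hc2) (hu' := hc1)
          (hv' := hc2.trans hc1)] at h
        exact h
    obtain ⟨hw, hcyc⟩ := key v hv
    exact (hf (G.connectedComponentMk v)).2.1 ⟨v, rfl⟩ hcyc
  · rintro ⟨a, b, x, hab, hnadj, hax, hbx⟩
    obtain ⟨hc1, hax⟩ := glue_true G hax
    obtain ⟨hc2, hbx⟩ := glue_true G hbx
    have hba : G.connectedComponentMk b = G.connectedComponentMk a := hc2.symm.trans hc1
    refine (hf (G.connectedComponentMk a)).2.2
      ⟨⟨a, rfl⟩, ⟨b, hba⟩, ⟨x, hc1⟩, fun h => hab (congrArg Subtype.val h), hnadj, hax, ?_⟩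
    rw [← f_congr G f hba (hu := rfl) (hv := hc2) (hu' := hba) (hv' := hc1)]
    exact hbx

noncomputable def theEquiv : {D : V → V → Bool // IsAMOB G D} ≃
    ∀ c : G.ConnectedComponent,
      {D : c.supp → c.supp → Bool // IsAMOB (G.induce c.supp) D} where
  toFun D c := ⟨restrict G D.1 c, restrict_isAMOB G D.2 c⟩
  invFun f := ⟨glue G (fun c => (f c).1), glue_isAMOB G _ (fun c => (f c).2)⟩
  left_inv := by
    rintro ⟨D, hD⟩
    apply Subtype.ext
    funext u v
    show glue G (fun c => restrict G D c) u v = D u v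
    unfold glue
    split
    · rfl
    · rename_i h
      cases hDuv : D u v
      · rfl
      · exact absurd (SimpleGraph.ConnectedComponent.sound
          ((hD.1.1 u v hDuv).symm.reachable)) h
  right_inv := by
    intro f
    funext c
    apply Subtype.ext
    funext u v
    obtain ⟨u, hu⟩ := u
    obtain ⟨v, hv⟩ := v
    show glue G (fun c => (f c).1) u v = (f c).1 ⟨u, hu⟩ ⟨v, hv⟩
    have hu' : G.connectedComponentMk u = c := hu
    have hv' : G.connectedComponentMk v = c := hv
    rw [glue_eq G (hv'.trans hu'.symm)]
    exact f_congr G (fun c => (f c).1) hu' rfl (hv'.trans hu'.symm) hu hv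

end Stmt18Aux

/-- Choosing an AMO of each connected component of the undirected part
independently gives all consistent extensions; hence the number of consistent
extensions (AMOs of the undirected part) equals the product, over the
components `Cᵢ`, of the number of AMOs of `Cᵢ`. -/
theorem stmt18 {V : Type} [Fintype V] (G : SimpleGraph V) :
    Nat.card {D : V → V → Bool // IsAMOB G D} =
      Nat.card (∀ c : G.ConnectedComponent,
        {D : c.supp → c.supp → Bool // IsAMOB (G.induce c.supp) D}) := by
  exact Nat.card_congr (Stmt18Aux.theEquiv G)
end

section
/- Let D and D' be two orientations of the same undirected graph, both acyclic and with identical v-structures, that differ in exactly one edge: x → y in D and y → x in D'. Then the edge x → y is covered in D, i.e., Pa_D(y) = Pa_D(x) ∪ {x}. -/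
/-- If two acyclic orientations of the same undirected graph have identical
v-structures and differ in exactly one edge — `x → y` in `D` and `y → x` in
`D'` — then `x → y` is covered in `D`, i.e. `Pa_D(y) = Pa_D(x) ∪ {x}`. -/
theorem stmt19 {V : Type} (D D' : V → V → Prop)
    (hacyc : ∀ v : V, ¬ Relation.TransGen D v v)
    (hacyc' : ∀ v : V, ¬ Relation.TransGen D' v v)
    (hskel : ∀ u v : V, (D u v ∨ D v u) ↔ (D' u v ∨ D' v u))
    (hvs : ∀ a b c : V,
      (a ≠ b ∧ ¬ (D a b ∨ D b a) ∧ D a c ∧ D b c) ↔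
      (a ≠ b ∧ ¬ (D' a b ∨ D' b a) ∧ D' a c ∧ D' b c))
    (x y : V) (hxy : D x y) (hyx : D' y x)
    (hdiff : ∀ u v : V, ¬ (u = x ∧ v = y) → ¬ (u = y ∧ v = x) →
      (D u v ↔ D' u v)) :
    ∀ z : V, D z y ↔ (D z x ∨ z = x) := by
  have hxney : x ≠ y := by rintro rfl; exact hacyc x (.single hxy)
  intro z
  constructor
  · intro hzy
    by_cases hzx : z = x
    · exact Or.inr hzx
    refine Or.inl ?_
    have hzney : z ≠ y := by rintro rfl; exact hacyc z (.single hzy)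
    have hD'zy : D' z y :=
      (hdiff z y (fun h => hzx h.1) (fun h => hzney h.1)).mp hzy
    by_cases hadj : D z x ∨ D x z
    · rcases hadj with h | h
      · exact h
      · have hD'xz : D' x z :=
          (hdiff x z (fun h => hzney h.2) (fun h => hxney h.1)).mp h
        exact absurd
          (Relation.TransGen.head hyx (Relation.TransGen.head hD'xz (.single hD'zy)))
          (hacyc' y)
    · have hvsD' := (hvs z x y).mp ⟨hzx, hadj, hzy, hxy⟩
      exact absurd (Relation.TransGen.head hvsD'.2.2.2 (.single hyx)) (hacyc' x)
  · rintro (hzx | rfl)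
    · by_contra hzy
      have hznex : z ≠ x := by rintro rfl; exact hacyc z (.single hzx)
      have hzney : z ≠ y := by
        rintro rfl
        exact hacyc x (Relation.TransGen.head hxy (.single hzx))
      have hD'zx : D' z x :=
        (hdiff z x (fun h => hznex h.1) (fun h => hzney h.1)).mp hzx
      by_cases hadj : D' z y ∨ D' y z
      · rcases (hskel z y).mpr hadj with h | h
        · exact hzy h
        · exact hacyc x
            (Relation.TransGen.head hxy (Relation.TransGen.head h (.single hzx)))
      · have hvsD := (hvs z y x).mpr ⟨hzney, hadj, hD'zx, hyx⟩
        exact hacyc x (Relation.TransGen.head hxy (.single hvsD.2.2.2))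
    · exact hxy
end
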